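/- arXiv:2605.27780 — 7 statements merged into one kernel-verified Lean document; each statement's English description precedes it below -/
import Mathlib

section
/- For every integer k ≥ 1, a tree T has pathwidth at most k if and only if T contains a path P such that the forest T − V(P) has pathwidth at most k − 1. -/
/-- `B` is a path-partition of `G` indexed by `Fin m`: the bags partition the
vertex set and every edge joins vertices in bags with indices differing by at most 1. -/
def IsPathPartition {V : Type*} (G : SimpleGraph V) {m : ℕ} (B : Fin m → Finset V) : Prop :=
  (∀ v : V, ∃! i : Fin m, v ∈ B i) ∧
  ∀ ⦃v w : V⦄, G.Adj v w → ∀ ⦃i j : Fin m⦄, v ∈ B i → w ∈ B j →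
    (i.val : ℤ) - j.val ≤ 1 ∧ (j.val : ℤ) - i.val ≤ 1

/-- `B` is a path-decomposition of the part of `G` induced on `U`:
bags lie in `U`, every edge of `G` inside `U` is in a common bag, every vertex
of `U` is in some bag, and the bags containing a given vertex are consecutive. -/
def IsPathDecompOn {V : Type*} (G : SimpleGraph V) (U : Set V) {n : ℕ}
    (B : Fin n → Finset V) : Prop :=
  (∀ i, ↑(B i) ⊆ U) ∧
  (∀ ⦃v w : V⦄, G.Adj v w → v ∈ U → w ∈ U → ∃ i, v ∈ B i ∧ w ∈ B i) ∧
  (∀ v ∈ U, ∃ i, v ∈ B i) ∧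
  (∀ (v : V) (i j l : Fin n), i ≤ j → j ≤ l → v ∈ B i → v ∈ B l → v ∈ B j)

/-- The part of `G` induced on `U` has pathwidth at most `k`. -/
def PWleOn {V : Type*} (G : SimpleGraph V) (U : Set V) (k : ℕ) : Prop :=
  ∃ (n : ℕ) (B : Fin n → Finset V), 0 < n ∧ IsPathDecompOn G U B ∧
    ∀ i, (B i).card ≤ k + 1

/-- `G` has pathwidth at most `k`. -/
def PWle {V : Type*} (G : SimpleGraph V) (k : ℕ) : Prop :=
  PWleOn G Set.univ k

/-- `B` is a `T`-partition of `G`: the bags (indexed by the vertices of `T`)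
partition `V(G)` and every edge of `G` joins vertices in the same bag or in
bags indexed by adjacent nodes of `T`. -/
def IsTreePartition {ι V : Type*} (T : SimpleGraph ι) (G : SimpleGraph V)
    (B : ι → Finset V) : Prop :=
  (∀ v : V, ∃! x : ι, v ∈ B x) ∧
  ∀ ⦃v w : V⦄, G.Adj v w → ∀ ⦃x y : ι⦄, v ∈ B x → w ∈ B y → x = y ∨ T.Adj x y

/-- `C` is a tree-decomposition of `G` indexed by the tree `T`: every edge lies
in some bag and for each vertex the nodes whose bags contain it induce a
non-empty connected subgraph of `T`. -/
def IsTreeDecomp {ι V : Type*} (T : SimpleGraph ι) (G : SimpleGraph V)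
    (C : ι → Finset V) : Prop :=
  (∀ ⦃v w : V⦄, G.Adj v w → ∃ x, v ∈ C x ∧ w ∈ C x) ∧
  (∀ v : V, ∃ x, v ∈ C x) ∧
  (∀ v : V, (T.induce {x : ι | v ∈ C x}).Connected)

/-- `G` has maximum degree at most `d`. -/
def MaxDegLE {V : Type*} (G : SimpleGraph V) (d : ℕ) : Prop :=
  ∀ v : V, (G.neighborSet v).ncard ≤ d

/-- The graph obtained from `G` by deleting the vertices in `S`. -/
def delv {V : Type*} (G : SimpleGraph V) (S : Set V) : SimpleGraph V :=
  SimpleGraph.fromRel (fun a b => G.Adj a b ∧ a ∉ S ∧ b ∉ S)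

/-!
Let `(B_1, …, B_n)` be a path-decomposition of width `k`. A walk cannot jump over a bag, so a
path `P` from a vertex of the first nonempty bag to a vertex of the last one meets every nonempty
bag, and deleting `V(P)` leaves a path-decomposition of `T − V(P)` of width `k - 1`; this holds in
every connected graph.

Conversely, let `P = p_0 … p_L` and let `(C_1, …, C_m)` be a path-decomposition of `T − V(P)` of
width `k - 1`. As `T` is a tree, every vertex `x` off `P` hangs off exactly one `p_t`, namely the
vertex of `P` reached first from `x`, and adjacent vertices off `P` hang off the same `p_t`. The
bags `p_t + (C_j ∩ {x hanging off p_t})` for `j = 1, …, m`, followed by `{p_t, p_{t+1}}`, listed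
block after block for `t = 0, …, L`, form a path-decomposition of `T` of width `k`.
-/

section

open SimpleGraph Finset

variable {V : Type*} {G : SimpleGraph V}

namespace IsPathDecompOn

variable {n : ℕ} {B : Fin n → Finset V}

theorem exists_mem_support_mem (hB : IsPathDecompOn G Set.univ B) {x y : V} (w : G.Walk x y)
    {i j l : Fin n} (hx : x ∈ B j) (hy : y ∈ B l) (hji : j ≤ i) (hil : i ≤ l) :
    ∃ z ∈ w.support, z ∈ B i := by
  induction w generalizing j with
  | nil => exact ⟨_, Walk.start_mem_support _, hB.2.2.2 _ j i l hji hil hx hy⟩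
  | @cons x a y hxa w ih =>
    obtain ⟨c, hxc, hac⟩ := hB.2.1 hxa trivial trivial
    by_cases hic : i ≤ c
    · exact ⟨x, Walk.start_mem_support _, hB.2.2.2 x j i c hji hic hx hxc⟩
    · obtain ⟨z, hz, hzi⟩ := ih hac hy (le_of_not_ge hic)
      exact ⟨z, List.mem_cons_of_mem _ hz, hzi⟩

theorem filter_mem {U W : Set V} [DecidablePred (· ∈ W)] (hB : IsPathDecompOn G U B)
    (hWU : W ⊆ U) : IsPathDecompOn G W fun i => (B i).filter (· ∈ W) := by
  obtain ⟨-, hedge, hcover, hconv⟩ := hB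
  refine ⟨fun i x hx => (mem_filter.1 hx).2, fun x y hxy hx hy => ?_, fun x hx => ?_,
    fun x i j l hij hjl hi hl => ?_⟩
  · obtain ⟨i, hxi, hyi⟩ := hedge hxy (hWU hx) (hWU hy)
    exact ⟨i, mem_filter.2 ⟨hxi, hx⟩, mem_filter.2 ⟨hyi, hy⟩⟩
  · obtain ⟨i, hxi⟩ := hcover x (hWU hx)
    exact ⟨i, mem_filter.2 ⟨hxi, hx⟩⟩
  · rw [mem_filter] at hi hl ⊢
    exact ⟨hconv x i j l hij hjl hi.1 hl.1, hi.2⟩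

end IsPathDecompOn

theorem pwleOn_of_linearOrder {ι : Type*} [Fintype ι] [LinearOrder ι] [Nonempty ι]
    {U : Set V} {k : ℕ} (B : ι → Finset V) (hU : ∀ i, ↑(B i) ⊆ U)
    (hedge : ∀ ⦃x y : V⦄, G.Adj x y → x ∈ U → y ∈ U → ∃ i, x ∈ B i ∧ y ∈ B i)
    (hcover : ∀ x ∈ U, ∃ i, x ∈ B i)
    (hconv : ∀ (x : V) (i j l : ι), i ≤ j → j ≤ l → x ∈ B i → x ∈ B l → x ∈ B j)
    (hcard : ∀ i, #(B i) ≤ k + 1) : PWleOn G U k := by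
  let e := Fintype.orderIsoFinOfCardEq ι rfl
  refine ⟨_, B ∘ e, Fintype.card_pos, ⟨fun i => hU _, fun x y hxy hx hy => ?_, fun x hx => ?_,
    fun x i j l hij hjl => hconv x _ _ _ (e.monotone hij) (e.monotone hjl)⟩, fun i => hcard _⟩
  · obtain ⟨i, hi⟩ := hedge hxy hx hy
    exact ⟨e.symm i, by simpa using hi⟩
  · obtain ⟨i, hi⟩ := hcover x hx
    exact ⟨e.symm i, by simpa using hi⟩

namespace SimpleGraph

theorem Connected.exists_isPath_pwleOn_compl_support (hG : G.Connected) {k : ℕ}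
    (h : PWle G k) :
    ∃ (u v : V) (p : G.Walk u v), p.IsPath ∧ PWleOn G {x | x ∉ p.support} (k - 1) := by
  classical
  obtain ⟨n, B, hn, hB, hcard⟩ := h
  have hne : (univ.filter fun i => (B i).Nonempty).Nonempty := by
    obtain ⟨i, hi⟩ := hB.2.2.1 hG.nonempty.some trivial
    exact ⟨i, mem_filter.2 ⟨mem_univ _, _, hi⟩⟩
  obtain ⟨i₀, hi₀, hmin⟩ := exists_min_image _ id hne
  obtain ⟨i₁, hi₁, hmax⟩ := exists_max_image _ id hne
  obtain ⟨a, ha⟩ := (mem_filter.1 hi₀).2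
  obtain ⟨b, hb⟩ := (mem_filter.1 hi₁).2
  obtain ⟨p, hp⟩ := (hG.preconnected a b).some.toPath
  refine ⟨a, b, p, hp, n, _, hn, hB.filter_mem (Set.subset_univ _), fun i => ?_⟩
  rcases (B i).eq_empty_or_nonempty with hi | hi
  · simp [hi]
  have hi' : i ∈ univ.filter fun i => (B i).Nonempty := mem_filter.2 ⟨mem_univ _, hi⟩
  obtain ⟨z, hzp, hzi⟩ := hB.exists_mem_support_mem p ha hb (hmin i hi') (hmax i hi')
  have hlt : #((B i).filter (· ∈ {x | x ∉ p.support})) < #(B i) :=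
    card_lt_card (filter_ssubset.2 ⟨z, hzi, fun h => h hzp⟩)
  have := hcard i
  omega

theorem Walk.exists_walk_edges_subset {u v a b : V} (p : G.Walk u v) (ha : a ∈ p.support)
    (hb : b ∈ p.support) : ∃ q : G.Walk a b, q.edges ⊆ p.edges := by
  classical
  refine ⟨(p.takeUntil a ha).reverse.append (p.takeUntil b hb), fun e he => ?_⟩
  rw [Walk.edges_append, Walk.edges_reverse, List.mem_append, List.mem_reverse] at he
  exact he.elim (p.edges_takeUntil_subset_edges ha ·) (p.edges_takeUntil_subset_edges hb ·)

theorem IsAcyclic.mk_mem_edges_of_adj (hG : G.IsAcyclic) {u v x y : V} (p : G.Walk u v)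
    (hx : x ∈ p.support) (hy : y ∈ p.support) (hxy : G.Adj x y) : s(x, y) ∈ p.edges := by
  obtain ⟨q, hq⟩ := p.exists_walk_edges_subset hx hy
  exact hq (isBridge_iff_forall_walk_mem_edges.1 (isAcyclic_iff_forall_adj_isBridge.1 hG hxy) q)

namespace Walk

variable {u v : V} (p : G.Walk u v)

def AttachesAt (x : V) (t : ℕ) : Prop :=
  t ≤ p.length ∧ ∃ y, G.Adj y (p.getVert t) ∧ ∃ w : G.Walk x y, ∀ z ∈ w.support, z ∉ p.support

variable {p}

theorem exists_attachesAt (hG : G.Connected) {x : V} (hx : x ∉ p.support) :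
    ∃ t, p.AttachesAt x t := by
  suffices ∀ {x c : V} (w : G.Walk x c), x ∉ p.support → c ∈ p.support → ∃ t, p.AttachesAt x t
    from (hG.preconnected x u).elim fun w => this w hx p.start_mem_support
  intro x c w
  induction w with
  | nil => exact fun hx hc => absurd hc hx
  | @cons x y c hxy w ih =>
    intro hx hc
    by_cases hy : y ∈ p.support
    · obtain ⟨t, rfl, ht⟩ := mem_support_iff_exists_getVert.1 hy
      exact ⟨t, ht, x, hxy, nil, by simpa using hx⟩
    · obtain ⟨t, ht, z, hz, w', hw'⟩ := ih hy hc
      refine ⟨t, ht, z, hz, cons hxy w', ?_⟩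
      simpa [hx] using hw'

theorem AttachesAt.unique (hG : G.IsAcyclic) (hp : p.IsPath) {x : V} {t₁ t₂ : ℕ}
    (h₁ : p.AttachesAt x t₁) (h₂ : p.AttachesAt x t₂) : t₁ = t₂ := by
  obtain ⟨ht₁, y₁, hy₁, w₁, hw₁⟩ := h₁
  obtain ⟨ht₂, y₂, hy₂, w₂, hw₂⟩ := h₂
  refine hp.getVert_injOn ht₁ ht₂ ?_
  set a := p.getVert t₁
  set b := p.getVert t₂
  have ha : a ∉ w₁.support ∧ a ∉ w₂.support :=
    ⟨fun h => hw₁ a h (p.getVert_mem_support t₁), fun h => hw₂ a h (p.getVert_mem_support t₁)⟩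
  have hy₁p : y₁ ∉ p.support := hw₁ y₁ w₁.end_mem_support
  obtain ⟨q, hq⟩ := p.exists_walk_edges_subset (p.getVert_mem_support t₂)
    (p.getVert_mem_support t₁)
  -- the walk `y₁ → x → y₂ → b → a`, the last stretch along `p`, must cross the bridge `y₁a`,
  -- and only its edge `y₂b` can be that bridge
  have hbridge := isBridge_iff_forall_walk_mem_edges.1 (isAcyclic_iff_forall_adj_isBridge.1 hG hy₁)
    ((w₁.reverse.append w₂).append (cons hy₂ q))
  simp only [edges_append, edges_reverse, edges_cons, List.mem_append, List.mem_reverse,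
    List.mem_cons] at hbridge
  rcases hbridge with (h | h) | h | h
  · exact absurd (w₁.snd_mem_support_of_mem_edges h) ha.1
  · exact absurd (w₂.snd_mem_support_of_mem_edges h) ha.2
  · rcases Sym2.eq_iff.1 h with ⟨-, hab⟩ | ⟨hy₁b, -⟩
    · exact hab
    · exact absurd (hy₁b ▸ p.getVert_mem_support t₂) hy₁p
  · exact absurd (p.fst_mem_support_of_mem_edges (hq h)) hy₁p

-- `0` when `x` hangs off nowhere, e.g. when `x` lies on `p`.
open Classical in
noncomputable def attachIndex (p : G.Walk u v) (x : V) : ℕ :=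
  if h : ∃ t, p.AttachesAt x t then h.choose else 0

theorem attachesAt_attachIndex (hG : G.Connected) {x : V} (hx : x ∉ p.support) :
    p.AttachesAt x (p.attachIndex x) := by
  have h := exists_attachesAt hG hx
  rw [attachIndex, dif_pos h]
  exact h.choose_spec

theorem AttachesAt.attachIndex_eq (hG : G.IsAcyclic) (hp : p.IsPath) {x : V} {t : ℕ}
    (h : p.AttachesAt x t) : p.attachIndex x = t := by
  have h' : ∃ t, p.AttachesAt x t := ⟨t, h⟩
  rw [attachIndex, dif_pos h']
  exact h'.choose_spec.unique hG hp h

theorem attachIndex_eq_of_adj_getVert (hG : G.IsAcyclic) (hp : p.IsPath) {x : V} {t : ℕ}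
    (hx : x ∉ p.support) (ht : t ≤ p.length) (hxt : G.Adj x (p.getVert t)) :
    p.attachIndex x = t :=
  AttachesAt.attachIndex_eq hG hp ⟨ht, x, hxt, nil, by simpa using hx⟩

theorem attachIndex_eq_of_adj (hG : G.IsTree) (hp : p.IsPath) {x y : V} (hx : x ∉ p.support)
    (hy : y ∉ p.support) (hxy : G.Adj x y) : p.attachIndex x = p.attachIndex y := by
  obtain ⟨ht, z, hz, w, hw⟩ := attachesAt_attachIndex hG.connected hy
  exact AttachesAt.attachIndex_eq hG.isAcyclic hp ⟨ht, z, hz, cons hxy w, by simpa [hx] using hw⟩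

variable {m : ℕ} {C : Fin m → Finset V}

open Classical in
noncomputable def spineBag (p : G.Walk u v) (C : Fin m → Finset V) (t j : ℕ) : Finset V :=
  if h : j < m then insert (p.getVert t) ((C ⟨j, h⟩).filter (p.attachIndex · = t))
  else {p.getVert t, p.getVert (t + 1)}

theorem mem_spineBag_of_notMem {x : V} (hx : x ∉ p.support) {t j : ℕ} :
    x ∈ p.spineBag C t j ↔ ∃ h : j < m, x ∈ C ⟨j, h⟩ ∧ p.attachIndex x = t := by
  have hne : ∀ s, x ≠ p.getVert s := fun s h => hx (h ▸ p.getVert_mem_support s)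
  classical
  unfold spineBag
  split_ifs with hj <;> simp [hj, hne]

theorem getVert_mem_spineBag (hp : p.IsPath) (hC : ∀ j, ∀ x ∈ C j, x ∉ p.support) {s t j : ℕ}
    (hs : s ≤ p.length) (ht : t ≤ p.length) :
    p.getVert s ∈ p.spineBag C t j ↔ s = t ∨ m ≤ j ∧ s = t + 1 := by
  classical
  have hinj : ∀ {r}, r ≤ p.length → (p.getVert s = p.getVert r ↔ s = r) :=
    fun hr => ⟨fun h => hp.getVert_injOn hs hr h, fun h => h ▸ rfl⟩
  unfold spineBag
  split_ifs with hj
  · have hnot : p.getVert s ∉ C ⟨j, hj⟩ := fun h => hC _ _ h (p.getVert_mem_support s)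
    simp only [mem_insert, mem_filter, hinj ht, hnot, false_and, or_false]
    omega
  · rcases ht.lt_or_eq with ht' | ht'
    · rw [mem_insert, mem_singleton, hinj ht, hinj ht']
      omega
    · have hlast : p.getVert (t + 1) = p.getVert t := by
        rw [p.getVert_of_length_le (by omega), p.getVert_of_length_le (by omega)]
      rw [hlast, pair_eq_singleton, mem_singleton, hinj ht]
      omega

theorem card_spineBag_le {k : ℕ} (hC : ∀ j, #(C j) ≤ k + 1) (t j : ℕ) :
    #(p.spineBag C t j) ≤ k + 2 := by
  classical
  unfold spineBag
  split_ifs with hj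
  · have := (card_filter_le (C ⟨j, hj⟩) (p.attachIndex · = t)).trans (hC ⟨j, hj⟩)
    exact (card_insert_le _ _).trans (by omega)
  · exact (card_insert_le _ _).trans (by simp)

theorem exists_mem_spineBag (hT : G.IsTree) (hp : p.IsPath)
    (hC : IsPathDecompOn G {x | x ∉ p.support} C) (x : V) :
    ∃ t ≤ p.length, ∃ j ≤ m, x ∈ p.spineBag C t j := by
  by_cases hx : x ∈ p.support
  · obtain ⟨s, rfl, hs⟩ := mem_support_iff_exists_getVert.1 hx
    exact ⟨s, hs, 0, Nat.zero_le _, (getVert_mem_spineBag hp (hC.1 ·) hs hs).2 (Or.inl rfl)⟩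
  · obtain ⟨j, hj⟩ := hC.2.2.1 x hx
    exact ⟨_, (attachesAt_attachIndex hT.connected hx).1, j, j.2.le,
      (mem_spineBag_of_notMem hx).2 ⟨j.2, hj, rfl⟩⟩

theorem exists_mem_spineBag_of_adj (hT : G.IsTree) (hp : p.IsPath)
    (hC : IsPathDecompOn G {x | x ∉ p.support} C) {x y : V} (hxy : G.Adj x y) :
    ∃ t ≤ p.length, ∃ j ≤ m, x ∈ p.spineBag C t j ∧ y ∈ p.spineBag C t j := by
  have hoff : ∀ {x y}, G.Adj x y → x ∉ p.support → y ∈ p.support →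
      ∃ t ≤ p.length, ∃ j ≤ m, x ∈ p.spineBag C t j ∧ y ∈ p.spineBag C t j := by
    intro x y hxy hx hy
    obtain ⟨s, rfl, hs⟩ := mem_support_iff_exists_getVert.1 hy
    obtain ⟨j, hj⟩ := hC.2.2.1 x hx
    exact ⟨s, hs, j, j.2.le, (mem_spineBag_of_notMem hx).2
      ⟨j.2, hj, attachIndex_eq_of_adj_getVert hT.isAcyclic hp hx hs hxy⟩,
      (getVert_mem_spineBag hp (hC.1 ·) hs hs).2 (Or.inl rfl)⟩
  by_cases hx : x ∈ p.support <;> by_cases hy : y ∈ p.support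
  · obtain ⟨t, ht, he⟩ := p.mk_mem_edges_iff_exists.1 (hT.isAcyclic.mk_mem_edges_of_adj p hx hy hxy)
    have hbag : ∀ s, s = t ∨ s = t + 1 → p.getVert s ∈ p.spineBag C t m := fun s hs =>
      (getVert_mem_spineBag hp (hC.1 ·) (by omega) ht.le).2 (by omega)
    refine ⟨t, ht.le, m, le_rfl, ?_⟩
    rcases Sym2.eq_iff.1 he with ⟨rfl, rfl⟩ | ⟨rfl, rfl⟩
    exacts [⟨hbag t (Or.inl rfl), hbag _ (Or.inr rfl)⟩, ⟨hbag _ (Or.inr rfl), hbag t (Or.inl rfl)⟩]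
  · obtain ⟨t, ht, j, hj, hyt, hxt⟩ := hoff hxy.symm hy hx
    exact ⟨t, ht, j, hj, hxt, hyt⟩
  · exact hoff hxy hx hy
  · obtain ⟨j, hxj, hyj⟩ := hC.2.1 hxy hx hy
    exact ⟨_, (attachesAt_attachIndex hT.connected hx).1, j, j.2.le,
      (mem_spineBag_of_notMem hx).2 ⟨j.2, hxj, rfl⟩,
      (mem_spineBag_of_notMem hy).2 ⟨j.2, hyj, (attachIndex_eq_of_adj hT hp hx hy hxy).symm⟩⟩

theorem mem_spineBag_of_lex_between (hp : p.IsPath)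
    (hC : IsPathDecompOn G {x | x ∉ p.support} C) {x : V} {t₁ t₂ t₃ j₁ j₂ j₃ : ℕ}
    (ht₁ : t₁ ≤ p.length) (ht₂ : t₂ ≤ p.length) (ht₃ : t₃ ≤ p.length)
    (h₁₂ : t₁ < t₂ ∨ t₁ = t₂ ∧ j₁ ≤ j₂) (h₂₃ : t₂ < t₃ ∨ t₂ = t₃ ∧ j₂ ≤ j₃)
    (h₁ : x ∈ p.spineBag C t₁ j₁) (h₃ : x ∈ p.spineBag C t₃ j₃) : x ∈ p.spineBag C t₂ j₂ := by
  by_cases hx : x ∈ p.support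
  · obtain ⟨s, rfl, hs⟩ := mem_support_iff_exists_getVert.1 hx
    rw [getVert_mem_spineBag hp (hC.1 ·) hs ht₁] at h₁
    rw [getVert_mem_spineBag hp (hC.1 ·) hs ht₃] at h₃
    rw [getVert_mem_spineBag hp (hC.1 ·) hs ht₂]
    omega
  · rw [mem_spineBag_of_notMem hx] at h₁ h₃ ⊢
    obtain ⟨hj₁, hx₁, rfl⟩ := h₁
    obtain ⟨hj₃, hx₃, ht⟩ := h₃
    refine ⟨by omega, hC.2.2.2 x ⟨j₁, hj₁⟩ _ ⟨j₃, hj₃⟩ ?_ ?_ hx₁ hx₃, by omega⟩ <;>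
      simp only [Fin.mk_le_mk] <;> omega

end Walk

theorem IsTree.pwle_succ_of_isPath_pwleOn_compl_support (hT : G.IsTree) {u v : V}
    {p : G.Walk u v} (hp : p.IsPath) {k : ℕ} (h : PWleOn G {x | x ∉ p.support} k) :
    PWle G (k + 1) := by
  obtain ⟨m, C, -, hC, hCcard⟩ := h
  refine pwleOn_of_linearOrder (ι := Fin (p.length + 1) ×ₗ Fin (m + 1))
    (fun i => p.spineBag C (ofLex i).1 (ofLex i).2) (fun _ => Set.subset_univ _)
    (fun x y hxy _ _ => ?_) (fun x _ => ?_) (fun x i j l hij hjl => ?_)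
    (fun i => p.card_spineBag_le hCcard _ _)
  · obtain ⟨t, ht, j, hj, hx, hy⟩ := Walk.exists_mem_spineBag_of_adj hT hp hC hxy
    exact ⟨toLex (⟨t, by omega⟩, ⟨j, by omega⟩), hx, hy⟩
  · obtain ⟨t, ht, j, hj, hx⟩ := Walk.exists_mem_spineBag hT hp hC x
    exact ⟨toLex (⟨t, by omega⟩, ⟨j, by omega⟩), hx⟩
  · simp only [Prod.Lex.le_iff, Fin.lt_def, Fin.le_def, Fin.ext_iff] at hij hjl
    exact Walk.mem_spineBag_of_lex_between hp hC (by omega) (by omega) (by omega) hij hjl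

end SimpleGraph

end

/-- For every integer `k ≥ 1`, a tree `T` has pathwidth at most
`k` if and only if `T` contains a path `P` such that `T − V(P)` has pathwidth
at most `k − 1`. -/
theorem stmt3 {V : Type*} (T : SimpleGraph V) (hT : T.IsTree) (k : ℕ) (hk : 1 ≤ k) :
    PWle T k ↔
      ∃ (u v : V) (p : T.Walk u v), p.IsPath ∧
        PWleOn T {x : V | x ∉ p.support} (k - 1) := by
  refine ⟨hT.connected.exists_isPath_pwleOn_compl_support, fun ⟨_, _, p, hp, h⟩ => ?_⟩
  obtain ⟨k, rfl⟩ := Nat.exists_eq_add_of_le' hk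
  exact hT.pwle_succ_of_isPath_pwleOn_compl_support hp h
end

section
/- If G is a connected graph with a path-decomposition (B_1,…,B_n) of width at most k, and P is a path in G from a vertex of B_1 to a vertex of B_n, then P has at least one vertex in each bag B_i, and (B_1 \ V(P),…,B_n \ V(P)) is a path-decomposition of G − V(P) of width at most k − 1. -/
/-
A walk cannot jump over a bag: each edge lies in a common bag and the bags containing a
vertex are consecutive, so a walk from a vertex of `B j` to a vertex of `B l` meets every
bag in between. Hence a walk from the first to the last bag meets every bag, so removing
its vertices from the bags lowers the width by one.
-/

namespace IsPathDecompOn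

variable {V : Type*} {G : SimpleGraph V} {n : ℕ} {B : Fin n → Finset V}

theorem exists_mem_support_of_le (hB : IsPathDecompOn G Set.univ B) (i : Fin n) :
    ∀ {a b : V} (q : G.Walk a b) {j l : Fin n}, j ≤ i → i ≤ l → a ∈ B j → b ∈ B l →
      ∃ x ∈ q.support, x ∈ B i := by
  intro a b q
  induction q with
  | nil => exact fun hj hl ha hb => ⟨_, by simp, hB.2.2.2 _ _ i _ hj hl ha hb⟩
  | cons hadj q ih =>
    intro j l hj hl ha hb
    obtain ⟨m, ham, hbm⟩ := hB.2.1 hadj trivial trivial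
    by_cases him : i ≤ m
    · exact ⟨_, by simp, hB.2.2.2 _ j i m hj him ha ham⟩
    · obtain ⟨x, hx, hxi⟩ := ih (le_of_not_ge him) hl hbm hb
      exact ⟨x, by simp [hx], hxi⟩

theorem filter {U : Set V} (hB : IsPathDecompOn G U B) (P : V → Prop) [DecidablePred P] :
    IsPathDecompOn G {x | x ∈ U ∧ P x} (fun i => (B i).filter P) := by
  obtain ⟨hsub, hedge, hmem, hconv⟩ := hB
  refine ⟨fun i x hx => ?_, fun a b hab ha hb => ?_, fun x hx => ?_,
    fun x i j l hij hjl hi hl => ?_⟩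
  · rw [Finset.coe_filter] at hx
    exact ⟨hsub i hx.1, hx.2⟩
  · obtain ⟨m, ham, hbm⟩ := hedge hab ha.1 hb.1
    exact ⟨m, Finset.mem_filter.2 ⟨ham, ha.2⟩, Finset.mem_filter.2 ⟨hbm, hb.2⟩⟩
  · obtain ⟨i, hi⟩ := hmem x hx.1
    exact ⟨i, Finset.mem_filter.2 ⟨hi, hx.2⟩⟩
  · rw [Finset.mem_filter] at hi hl ⊢
    exact ⟨hconv x i j l hij hjl hi.1 hl.1, hi.2⟩

end IsPathDecompOn

/-- If `G` is connected with a path-decomposition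
`(B_1, …, B_n)` of width at most `k` and `P` is a path in `G` from a vertex of
`B_1` to a vertex of `B_n`, then `P` meets every bag, and the bags with `V(P)`
removed form a path-decomposition of `G − V(P)` of width at most `k − 1`. -/
theorem stmt4 {V : Type*} [DecidableEq V] (G : SimpleGraph V)
    (k n : ℕ) (hn : 0 < n) (B : Fin n → Finset V)
    (hpd : IsPathDecompOn G Set.univ B) (hwidth : ∀ i, (B i).card ≤ k + 1)
    (u v : V) (p : G.Walk u v)
    (hu : u ∈ B ⟨0, hn⟩) (hv : v ∈ B ⟨n - 1, by omega⟩) :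
    (∀ i, ∃ x ∈ p.support, x ∈ B i) ∧
    IsPathDecompOn G {x : V | x ∉ p.support}
      (fun i => (B i).filter (· ∉ p.support)) ∧
    ∀ i, ((B i).filter (· ∉ p.support)).card ≤ k := by
  have hmeet : ∀ i, ∃ x ∈ p.support, x ∈ B i := fun i =>
    hpd.exists_mem_support_of_le i p (Fin.le_def.2 (Nat.zero_le _))
      (Fin.le_def.2 (Nat.le_sub_one_of_lt i.isLt)) hu hv
  refine ⟨hmeet, by simpa using hpd.filter (· ∉ p.support), fun i => ?_⟩
  obtain ⟨x, hxp, hxB⟩ := hmeet i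
  have hlt : ((B i).filter (· ∉ p.support)).card < (B i).card :=
    Finset.card_lt_card (Finset.filter_ssubset.2 ⟨x, hxB, not_not.2 hxp⟩)
  have := hwidth i
  omega
end

section
/- For every c ≥ 1 and every n > 3c, the comb tree S_n admits no path-partition of width at most c. Consequently, the path-partition-width of S_n is at least n/3. -/
/-- The comb tree `S_n`: vertices `(0, j)` form the spine path `P` (with `n`
vertices), and for each `i ∈ {1, …, n}` the vertices `(i, j)` form the tooth
path `Q_i` (with `n` vertices), whose first vertex `(i, 0)` is joined to the
`i`-th spine vertex `(0, i-1)`. -/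
def comb (n : ℕ) : SimpleGraph (Fin (n + 1) × Fin n) :=
  SimpleGraph.fromRel (fun a b =>
    (a.1 = b.1 ∧ a.2.val + 1 = b.2.val) ∨
    (a.1.val = 0 ∧ b.1.val = a.2.val + 1 ∧ b.2.val = 0))

open Finset

namespace IsPathPartition

variable {V : Type*} {G : SimpleGraph V} {m : ℕ} {B : Fin m → Finset V}

lemma index_le_add_length (hB : IsPathPartition G B) {u v : V} (p : G.Walk u v)
    {i j : Fin m} (hu : u ∈ B i) (hv : v ∈ B j) : (i : ℕ) ≤ j + p.length := by
  induction p generalizing i with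
  | nil => rw [(hB.1 _).unique hu hv]; simp
  | @cons u w v hadj p ih =>
    obtain ⟨k, hk, -⟩ := hB.1 w
    have hstep := (hB.2 hadj hu hk).1
    have hrest := ih hk hv
    rw [SimpleGraph.Walk.length_cons]
    omega

lemma index_le_add_edist (hB : IsPathPartition G B) {u v : V} {i j : Fin m}
    (hu : u ∈ B i) (hv : v ∈ B j) : (i : ℕ∞) ≤ j + G.edist u v := by
  by_cases h : G.edist u v = ⊤
  · simp [h]
  obtain ⟨p, hp⟩ := SimpleGraph.exists_walk_of_edist_ne_top h
  rw [← hp]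
  exact_mod_cast hB.index_le_add_length p hu hv

theorem card_le_of_ediam_le [Fintype V] (hB : IsPathPartition G B) {c d : ℕ}
    (hw : ∀ i, #(B i) ≤ c) (hd : G.ediam ≤ d) : Fintype.card V ≤ c * (d + 1) := by
  cases isEmpty_or_nonempty V
  · simp
  choose idx hidx using fun v => (hB.1 v).exists
  obtain ⟨v₀, -, hmin⟩ := exists_min_image univ idx univ_nonempty
  set a : ℕ := (idx v₀ : ℕ)
  let window : Finset (Fin m) := {i | (i : ℕ) ∈ Icc a (a + d)}
  have hwindow : #window ≤ d + 1 := by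
    calc #window ≤ #(Icc a (a + d)) :=
          card_le_card_of_injOn Fin.val (fun i hi => by simpa [window] using hi)
            Fin.val_injective.injOn
      _ = d + 1 := by simp; omega
  have hmaps : ∀ v ∈ univ, idx v ∈ window := fun v _ => by
    have hhi := (hB.index_le_add_edist (hidx v) (hidx v₀)).trans
      (add_le_add_right (SimpleGraph.edist_le_ediam.trans hd) _)
    simp only [window, mem_filter, mem_univ, mem_Icc, true_and]
    exact ⟨hmin v (mem_univ _), by exact_mod_cast hhi⟩
  calc Fintype.card V = #(univ : Finset V) := card_univ.symm
    _ ≤ c * #window := card_le_mul_card_image_of_maps_to hmaps c fun i _ =>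
        (card_le_card fun v hv => by rw [← (mem_filter.mp hv).2]; exact hidx v).trans (hw i)
    _ ≤ c * (d + 1) := Nat.mul_le_mul_left c hwindow

end IsPathPartition

section Comb

variable {n : ℕ}

lemma comb_adj_succ (i : Fin (n + 1)) (j : Fin n) (hj : (j : ℕ) + 1 < n) :
    (comb n).Adj (i, j) (i, ⟨j + 1, hj⟩) := by
  rw [comb, SimpleGraph.fromRel_adj]
  refine ⟨fun h => ?_, Or.inl (Or.inl ⟨rfl, rfl⟩)⟩
  simp [Fin.ext_iff] at h

lemma comb_adj_tooth (k : Fin n) : (comb n).Adj (0, k) (k.succ, ⟨0, k.pos⟩) := by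
  rw [comb, SimpleGraph.fromRel_adj]
  refine ⟨fun h => ?_, Or.inl (Or.inr ⟨rfl, rfl, rfl⟩)⟩
  exact (Fin.succ_ne_zero k) (congrArg Prod.fst h).symm

lemma comb_edist_le_val_sub (i : Fin (n + 1)) {j k : Fin n} (hjk : j ≤ k) :
    (comb n).edist (i, j) (i, k) ≤ ((k : ℕ) - j : ℕ) := by
  obtain ⟨t, ht⟩ : ∃ t, (k : ℕ) = j + t := ⟨k - j, by omega⟩
  induction t generalizing k with
  | zero => simp [Fin.ext (show (k : ℕ) = j by omega)]
  | succ t ih =>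
    have hk' : (j : ℕ) + t < n := by have := k.isLt; omega
    calc (comb n).edist (i, j) (i, k)
        ≤ (comb n).edist (i, j) (i, ⟨j + t, hk'⟩) + (comb n).edist (i, ⟨j + t, hk'⟩) (i, k) :=
          SimpleGraph.edist_triangle
      _ ≤ t + 1 := by
        gcongr
        · simpa using ih (k := ⟨j + t, hk'⟩) (Fin.le_iff_val_le_val.mpr (by simp)) rfl
        · rw [show k = ⟨j + t + 1, by omega⟩ from Fin.ext ht,
            SimpleGraph.edist_eq_one_iff_adj.mpr (comb_adj_succ i _ _)]
      _ = ((k : ℕ) - j : ℕ) := by rw [ht, Nat.add_sub_cancel_left]; push_cast; rfl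

lemma comb_edist_row_le (i : Fin (n + 1)) (j k : Fin n) :
    (comb n).edist (i, j) (i, k) ≤ (n - 1 : ℕ) := by
  have := j.isLt
  have := k.isLt
  rcases le_total j k with hjk | hkj
  · exact (comb_edist_le_val_sub i hjk).trans (Nat.cast_le.mpr (by omega))
  · rw [SimpleGraph.edist_comm]
    exact (comb_edist_le_val_sub i hkj).trans (Nat.cast_le.mpr (by omega))

lemma comb_exists_edist_spine_le (v : Fin (n + 1) × Fin n) :
    ∃ k : Fin n, (comb n).edist v (0, k) ≤ n := by
  obtain ⟨i, j⟩ := v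
  rcases Fin.eq_zero_or_eq_succ i with rfl | ⟨k, rfl⟩
  · exact ⟨j, by simp⟩
  refine ⟨k, ?_⟩
  calc (comb n).edist (k.succ, j) (0, k)
      ≤ (comb n).edist (k.succ, j) (k.succ, ⟨0, k.pos⟩) +
        (comb n).edist (k.succ, ⟨0, k.pos⟩) (0, k) := SimpleGraph.edist_triangle
    _ ≤ (n - 1 : ℕ) + 1 := by
      gcongr
      · exact comb_edist_row_le _ _ _
      · rw [SimpleGraph.edist_comm, SimpleGraph.edist_eq_one_iff_adj.mpr (comb_adj_tooth k)]
    _ = n := by norm_cast; have := k.pos; omega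

lemma comb_ediam_le : (comb n).ediam ≤ (3 * n - 1 : ℕ) := by
  refine SimpleGraph.ediam_le_of_edist_le fun u v => ?_
  obtain ⟨k, hk⟩ := comb_exists_edist_spine_le u
  obtain ⟨l, hl⟩ := comb_exists_edist_spine_le v
  calc (comb n).edist u v
      ≤ (comb n).edist u (0, k) + (comb n).edist (0, k) (0, l) + (comb n).edist (0, l) v :=
        SimpleGraph.edist_triangle.trans (add_le_add_left SimpleGraph.edist_triangle _)
    _ ≤ n + (n - 1 : ℕ) + n := by
      gcongr
      · exact comb_edist_row_le _ _ _
      · rwa [SimpleGraph.edist_comm]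
    _ = (3 * n - 1 : ℕ) := by norm_cast; have := k.pos; omega

lemma comb_succ_le_three_mul_width {m c : ℕ} {B : Fin m → Finset (Fin (n + 1) × Fin n)}
    (hB : IsPathPartition (comb n) B) (hw : ∀ i, #(B i) ≤ c) (hn : 0 < n) : n + 1 ≤ 3 * c := by
  have hcard := hB.card_le_of_ediam_le hw comb_ediam_le
  rw [Fintype.card_prod, Fintype.card_fin, Fintype.card_fin, Nat.sub_add_cancel (by omega)] at hcard
  exact Nat.le_of_mul_le_mul_right (by linarith) hn

end Comb

/-- For every `c ≥ 1` and every `n > 3c`, the comb tree `S_n`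
admits no path-partition of width at most `c`; consequently any path-partition
of `S_n` has width at least `n / 3`. -/
theorem stmt8 (n : ℕ) :
    (∀ c : ℕ, 1 ≤ c → 3 * c < n →
      ¬ ∃ (m : ℕ) (B : Fin m → Finset (Fin (n + 1) × Fin n)),
          IsPathPartition (comb n) B ∧ ∀ i, (B i).card ≤ c) ∧
    (∀ c : ℕ,
      (∃ (m : ℕ) (B : Fin m → Finset (Fin (n + 1) × Fin n)),
          IsPathPartition (comb n) B ∧ ∀ i, (B i).card ≤ c) →
      n / 3 ≤ c) := by
  constructor
  · rintro c - hcn ⟨m, B, hB, hw⟩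
    have := comb_succ_le_three_mul_width hB hw (by omega)
    omega
  · rintro c ⟨m, B, hB, hw⟩
    rcases Nat.eq_zero_or_pos n with rfl | hn
    · simp
    have := comb_succ_le_three_mul_width hB hw hn
    omega
end

section
/- For every graph G with pathwidth at most k and maximum degree at most d, and every set S of vertices of G, there exist a tree T with pathwidth at most 2k+1 and a T-partition (B_x : x ∈ V(T)) of G such that every bag has size at most f(k,d,|S|) and S is contained in a single bag B_r, where f(0,d,s) = max{s,1} and f(k,d,s) = max{s(k+1), 2(k+1) + f(k−1,d,4d(k+1))} for k ≥ 1. -/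
/-- The function `f(k, d, s)` with `f(0,d,s) = max{s,1}` and
`f(k,d,s) = max{s(k+1), 2(k+1) + f(k−1, d, 4d(k+1))}` for `k ≥ 1`. -/
def fRec : ℕ → ℕ → ℕ → ℕ
  | 0, _, s => max s 1
  | (k + 1), d, s => max (s * (k + 2)) (2 * (k + 2) + fRec k d (4 * d * (k + 2)))



lemma fRec_mono (k d : ℕ) {s s' : ℕ} (h : s ≤ s') : fRec k d s ≤ fRec k d s' := by
  cases k with
  | zero => exact max_le_max h le_rfl
  | succ k => exact max_le_max (Nat.mul_le_mul_right _ h) le_rfl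

/-- The tree (on `Fin (N+1)`) determined by a parent function. -/
def ptree (N : ℕ) (par : ℕ → ℕ) : SimpleGraph (Fin (N + 1)) :=
  SimpleGraph.fromRel (fun x y => par x.val = y.val)

lemma ptree_adj {N : ℕ} {par : ℕ → ℕ} {x y : Fin (N + 1)} :
    (ptree N par).Adj x y ↔ x ≠ y ∧ (par x.val = y.val ∨ par y.val = x.val) := by
  simp [ptree, SimpleGraph.fromRel_adj]

lemma ptree_isTree (N : ℕ) (par : ℕ → ℕ) (h0 : par 0 = 0)
    (hd : ∀ x, x ≠ 0 → par x < x) : (ptree N par).IsTree := by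
  have hb : ∀ x : Fin (N + 1), par x.val < N + 1 := by
    intro x
    rcases Nat.eq_zero_or_pos x.val with h | h
    · rw [h, h0]; omega
    · have := hd x.val (by omega); have := x.isLt; omega
  have hadjpar : ∀ x : Fin (N + 1), x.val ≠ 0 → (ptree N par).Adj x ⟨par x.val, hb x⟩ := by
    intro x hx
    rw [ptree_adj]
    refine ⟨?_, Or.inl rfl⟩
    intro hcon
    have h2 := congrArg Fin.val hcon
    simp only at h2
    have := hd x.val hx; omega
  constructor
  · -- connected
    constructor
    · intro x y
      have key : ∀ m (x : Fin (N + 1)), x.val ≤ m →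
          (ptree N par).Reachable x (0 : Fin (N+1)) := by
        intro m
        induction m with
        | zero =>
          intro x hx
          have : x = (0 : Fin (N+1)) := Fin.ext (by rw [Fin.val_zero]; omega)
          rw [this]
        | succ m ih =>
          intro x hx
          by_cases hx0 : x.val = 0
          · have : x = (0 : Fin (N+1)) := Fin.ext (by rw [Fin.val_zero]; omega)
            rw [this]
          · have h1 := hadjpar x hx0
            have h2 : par x.val ≤ m := by have := hd x.val hx0; omega
            exact (h1.reachable).trans (ih _ h2)
      exact ((key _ x le_rfl).trans (key _ y le_rfl).symm)
  · -- acyclic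
    intro u c hc
    classical
    have hsne : (c.support.toFinset : Finset (Fin (N + 1))).Nonempty :=
      ⟨u, by simp [SimpleGraph.Walk.start_mem_support]⟩
    set x := c.support.toFinset.max' hsne with hxdef
    have hxmem : x ∈ c.support := by
      have := c.support.toFinset.max'_mem hsne
      simpa using this
    have hmax : ∀ w ∈ c.support, w ≤ x := by
      intro w hw
      exact c.support.toFinset.le_max' w (by simpa using hw)
    -- neighbors of x that are ≤ x are the parent of x
    have hnbr : ∀ w : Fin (N + 1), (ptree N par).Adj x w → w ≤ x → w.val = par x.val := by
      intro w hadj hle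
      rw [ptree_adj] at hadj
      obtain ⟨hne, hor⟩ := hadj
      rcases hor with h | h
      · omega
      · exfalso
        by_cases hw0 : w.val = 0
        · rw [hw0, h0] at h
          exact hne (Fin.ext (by omega))
        · have := hd w.val hw0
          have hlev : w.val ≤ x.val := hle
          omega
    have hc' : (c.rotate x hxmem).IsCycle := hc.rotate hxmem
    have hsup' : ∀ w, w ∈ (c.rotate x hxmem).support → w ≤ x := by
      intro w hw
      rw [SimpleGraph.Walk.mem_support_iff] at hw
      rcases hw with rfl | hw
      · exact le_rfl
      · exact hmax w (List.mem_of_mem_tail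
          ((SimpleGraph.Walk.support_rotate c x hxmem).mem_iff.mp hw))
    revert hc' hsup'
    generalize c.rotate x hxmem = c'
    intro hc' hsup'
    cases c' with
    | nil => exact SimpleGraph.Walk.IsCycle.not_of_nil hc'
    | @cons _ y _ hadj q =>
      rw [SimpleGraph.Walk.cons_isCycle_iff] at hc'
      obtain ⟨hqpath, hxynot⟩ := hc'
      have hqrev : ¬ q.reverse.Nil := by
        intro hnil
        rw [SimpleGraph.Walk.nil_iff_length_eq] at hnil
        have : q.length = 0 := by
          have := q.length_reverse; omega
        have : y = x := SimpleGraph.Walk.eq_of_length_eq_zero this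
        subst this
        exact hadj.ne rfl
      obtain ⟨z, hxz, q2, hq2⟩ := SimpleGraph.Walk.not_nil_iff.mp hqrev
      have hzsup : z ∈ q.support := by
        have : z ∈ q.reverse.support := by
          rw [hq2, SimpleGraph.Walk.support_cons]
          exact List.mem_cons_of_mem _ (SimpleGraph.Walk.start_mem_support _)
        rwa [SimpleGraph.Walk.support_reverse, List.mem_reverse] at this
      have hzedge : s(x, z) ∈ q.edges := by
        have : s(x, z) ∈ q.reverse.edges := by
          rw [hq2, SimpleGraph.Walk.edges_cons]
          exact List.mem_cons_self
        rwa [SimpleGraph.Walk.edges_reverse, List.mem_reverse] at this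
      have hy : y.val = par x.val := by
        apply hnbr y hadj
        apply hsup'
        rw [SimpleGraph.Walk.support_cons]
        exact List.mem_cons_of_mem _ (SimpleGraph.Walk.start_mem_support _)
      have hzval : z.val = par x.val := by
        apply hnbr z hxz
        apply hsup'
        rw [SimpleGraph.Walk.support_cons]
        exact List.mem_cons_of_mem _ hzsup
      have hyz : y = z := Fin.ext (by omega)
      subst hyz
      exact hxynot hzedge




/-- Rooted tree-partition data over `ℕ`-indexed nodes (nodes `0..N`, root `0`),
together with a path decomposition (bags `C 0..C m`) of the tree itself. -/
structure RTP {V : Type} (G : SimpleGraph V) (W : Finset V) (bnd pwb : ℕ) where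
  N : ℕ
  m : ℕ
  par : ℕ → ℕ
  Bg : ℕ → Finset V
  C : ℕ → Finset ℕ
  hpar0 : par 0 = 0
  hdec : ∀ x, x ≠ 0 → par x < x
  hsupp : ∀ x, N < x → Bg x = ∅
  hsub : ∀ x, Bg x ⊆ W
  huniq : ∀ v ∈ W, ∃! x, v ∈ Bg x
  hedge : ∀ ⦃v w : V⦄, G.Adj v w → v ∈ W → w ∈ W → ∀ ⦃x y : ℕ⦄,
    v ∈ Bg x → w ∈ Bg y → x = y ∨ par x = y ∨ par y = x
  hcard : ∀ x, (Bg x).card ≤ bnd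
  hC0 : 0 ∈ C 0
  hCsupp : ∀ i, m < i → C i = ∅
  hCcover : ∀ x, x ≤ N → ∃ i, x ∈ C i
  hCconsec : ∀ (x : ℕ) ⦃i j l : ℕ⦄, i ≤ j → j ≤ l → x ∈ C i → x ∈ C l → x ∈ C j
  hCedge : ∀ x, x ≠ 0 → x ≤ N → ∃ i, x ∈ C i ∧ par x ∈ C i
  hCcard : ∀ i, (C i).card ≤ pwb
  hCmem : ∀ i x, x ∈ C i → x ≤ N

/-- An `ℕ`-indexed path decomposition of the part of `G` on `U`. -/
structure PDon {V : Type} (G : SimpleGraph V) (B : ℕ → Finset V) (U : Finset V)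
    (w n : ℕ) : Prop where
  hsub : ∀ j, B j ⊆ U
  hedge : ∀ ⦃v w' : V⦄, G.Adj v w' → v ∈ U → w' ∈ U → ∃ j, v ∈ B j ∧ w' ∈ B j
  hcover : ∀ v ∈ U, ∃ j, v ∈ B j
  hconsec : ∀ (v : V) ⦃i j l : ℕ⦄, i ≤ j → j ≤ l → v ∈ B i → v ∈ B l → v ∈ B j
  hwidth : ∀ j, (B j).card ≤ w
  hbound : ∀ j, n ≤ j → B j = ∅
  hzero : B 0 = ∅

def MainStmt (k d : ℕ) : Prop :=
  ∀ (V : Type) (_ : Fintype V) (_ : DecidableEq V) (G : SimpleGraph V),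
    MaxDegLE G d → ∀ (B : ℕ → Finset V) (U : Finset V) (n : ℕ),
      PDon G B U (k + 1) n → ∀ S : Finset V, S ⊆ U →
        ∃ t : RTP G U (fRec k d S.card) (2 * k + 2), S ⊆ t.Bg 0

lemma deg_count {V : Type} [Fintype V] [DecidableEq V] {G : SimpleGraph V} {d : ℕ}
    (hdeg : MaxDegLE G d) (X P : Finset V) [DecidablePred fun v => ∃ w ∈ X, G.Adj v w] :
    (P.filter (fun v => ∃ w ∈ X, G.Adj v w)).card ≤ X.card * d := by
  classical
  have hd1 : ∀ w : V, (Finset.univ.filter (fun v => G.Adj w v)).card ≤ d := by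
    intro w
    have h2 : (G.neighborSet w).ncard = (Finset.univ.filter (fun v => G.Adj w v)).card := by
      rw [Set.ncard_eq_toFinset_card']
      congr 1
      ext v
      simp [SimpleGraph.mem_neighborSet]
    have := hdeg w
    omega
  have hsub : P.filter (fun v => ∃ w ∈ X, G.Adj v w) ⊆
      X.biUnion (fun w => Finset.univ.filter (fun v => G.Adj w v)) := by
    intro v hv
    simp only [Finset.mem_filter, Finset.mem_biUnion] at hv ⊢
    obtain ⟨-, w, hw, hadj⟩ := hv
    exact ⟨w, hw, by simp [hadj.symm]⟩
  calc (P.filter (fun v => ∃ w ∈ X, G.Adj v w)).card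
      ≤ (X.biUnion (fun w => Finset.univ.filter (fun v => G.Adj w v))).card :=
        Finset.card_le_card hsub
    _ ≤ ∑ w ∈ X, (Finset.univ.filter (fun v => G.Adj w v)).card := Finset.card_biUnion_le
    _ ≤ ∑ _w ∈ X, d := Finset.sum_le_sum (fun w _ => hd1 w)
    _ = X.card * d := by rw [Finset.sum_const, smul_eq_mul]

lemma main_zero (d : ℕ) : MainStmt 0 d := by
  intro V _ _ G hdeg B U n hpd S hS
  classical
  have hedgeless : ∀ ⦃v w : V⦄, G.Adj v w → v ∈ U → w ∈ U → False := by
    intro v w hadj hv hw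
    obtain ⟨j, hvj, hwj⟩ := hpd.hedge hadj hv hw
    have hc := hpd.hwidth j
    have : v = w := by
      by_contra hne
      have hsub2 : ({v, w} : Finset V) ⊆ B j := by
        intro z hz; simp at hz; rcases hz with rfl | rfl <;> assumption
      have h2 := Finset.card_le_card hsub2
      rw [Finset.card_insert_of_notMem (by simp [hne]), Finset.card_singleton] at h2
      omega
    subst this
    exact G.loopless.irrefl v hadj
  set D : Finset V := U \ S with hD
  have hlen : D.toList.length = D.card := Finset.length_toList D
  set F : ℕ → Finset V := fun x => if x = 0 then S else
      (D.toList[x-1]?.map (fun a => ({a} : Finset V))).getD ∅ with hF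
  set CC : ℕ → Finset ℕ := fun i => if i ≤ D.card then insert 0 {i} else ∅ with hCC
  have hFmem : ∀ (v : V) (x : ℕ), v ∈ F x ↔
      (x = 0 ∧ v ∈ S) ∨ (x ≠ 0 ∧ D.toList[x - 1]? = some v) := by
    intro v x
    simp only [hF]
    by_cases h0 : x = 0
    · subst h0; simp
    · rw [if_neg h0]
      cases h : D.toList[x-1]? with
      | none => simp [h0, h]
      | some a =>
        simp only [h, Option.map_some, Option.getD_some, Finset.mem_singleton]
        constructor
        · rintro rfl; exact Or.inr ⟨h0, rfl⟩
        · rintro (⟨h1, -⟩ | ⟨-, h2⟩)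
          · exact absurd h1 h0
          · exact (Option.some_inj.mp h2).symm
  have hDmem : ∀ (v : V) (x : ℕ), D.toList[x]? = some v → v ∈ D := by
    intro v x h
    rw [← Finset.mem_toList, List.mem_iff_getElem?]
    exact ⟨x, h⟩
  refine ⟨⟨D.card, D.card, fun _ => 0, F, CC,
    rfl, ?_, ?_, ?_, ?_, ?_, ?_, ?_, ?_, ?_, ?_, ?_, ?_, ?_⟩, ?_⟩
  · intro x hx; show (0:ℕ) < x; omega
  · intro x hx
    simp only [hF]
    rw [if_neg (by omega), List.getElem?_eq_none (by omega)]
    rfl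
  · intro x v hv
    rcases (hFmem v x).mp hv with ⟨-, hv⟩ | ⟨-, hv⟩
    · exact hS hv
    · have := hDmem v _ hv
      rw [hD] at this
      exact (Finset.mem_sdiff.mp this).1
  · -- uniqueness
    intro v hv
    by_cases hvS : v ∈ S
    · refine ⟨0, (hFmem v 0).mpr (Or.inl ⟨rfl, hvS⟩), ?_⟩
      intro x hx
      rcases (hFmem v x).mp hx with ⟨h, -⟩ | ⟨-, hget⟩
      · exact h
      · exfalso
        have := hDmem v _ hget
        rw [hD, Finset.mem_sdiff] at this
        exact this.2 hvS
    · have hvD : v ∈ D.toList := by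
        rw [Finset.mem_toList, hD, Finset.mem_sdiff]; exact ⟨hv, hvS⟩
      rw [List.mem_iff_getElem?] at hvD
      obtain ⟨i, hget⟩ := hvD
      have hilen : i < D.toList.length := by
        rcases List.getElem?_eq_some_iff.mp hget with ⟨h, -⟩; exact h
      refine ⟨i + 1, (hFmem v (i+1)).mpr (Or.inr ⟨by omega, by simpa using hget⟩), ?_⟩
      intro x hx
      rcases (hFmem v x).mp hx with ⟨-, hvS'⟩ | ⟨hx0, hget'⟩
      · exact absurd hvS' hvS
      · have := (List.getElem?_inj hilen (Finset.nodup_toList D)).mp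
          (hget.trans hget'.symm)
        omega
  · intro v w hadj hv hw
    exact absurd (hedgeless hadj hv hw) (by simp)
  · intro x
    by_cases h0 : x = 0
    · subst h0
      simp only [hF, if_pos rfl]
      exact le_max_left _ _
    · simp only [hF]
      rw [if_neg h0]
      cases h : D.toList[x-1]? with
      | none => simp
      | some a =>
        simp only [Option.map_some, Option.getD_some, Finset.card_singleton]
        exact le_max_right _ _
  · simp only [hCC]
    rw [if_pos (Nat.zero_le _)]; simp
  · intro i hi
    simp only [hCC]
    rw [if_neg (by omega)]
  · intro x hx
    refine ⟨x, ?_⟩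
    simp only [hCC]
    rw [if_pos hx]; simp
  · intro x i j l hij hjl hxi hxl
    simp only [hCC] at hxi hxl ⊢
    have hiN : i ≤ D.card := by
      by_contra h; rw [if_neg h] at hxi; simp at hxi
    have hlN : l ≤ D.card := by
      by_contra h; rw [if_neg h] at hxl; simp at hxl
    rw [if_pos hiN] at hxi
    rw [if_pos hlN] at hxl
    rw [if_pos (by omega)]
    simp only [Finset.mem_insert, Finset.mem_singleton] at hxi hxl ⊢
    rcases hxi with rfl | rfl
    · exact Or.inl rfl
    · rcases hxl with h | h
      · exact Or.inl h
      · omega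
  · intro x hx0 hxN
    refine ⟨x, ?_, ?_⟩ <;> simp only [hCC] <;> rw [if_pos hxN] <;> simp
  · intro i
    simp only [hCC]
    by_cases h1 : i ≤ D.card
    · rw [if_pos h1]
      calc (insert 0 {i} : Finset ℕ).card ≤ ({i} : Finset ℕ).card + 1 :=
        Finset.card_insert_le _ _
      _ ≤ 2 * 0 + 2 := by simp
    · rw [if_neg h1]; simp
  · intro i x hx
    simp only [hCC] at hx
    by_cases h1 : i ≤ D.card
    · rw [if_pos h1] at hx
      simp only [Finset.mem_insert, Finset.mem_singleton] at hx
      rcases hx with rfl | rfl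
      · omega
      · exact h1
    · rw [if_neg h1] at hx; simp at hx
  · intro v hv
    exact (hFmem v 0).mpr (Or.inl ⟨rfl, hv⟩)



lemma home_le {V : Type} {G : SimpleGraph V} {W : Finset V} {bnd pwb : ℕ}
    (t : RTP G W bnd pwb) {v : V} {x : ℕ} (hv : v ∈ t.Bg x) : x ≤ t.N := by
  by_contra h
  rw [t.hsupp x (by omega)] at hv
  exact absurd hv (Finset.notMem_empty v)

lemma block_le {V : Type} {G : SimpleGraph V} {W : Finset V} {bnd pwb : ℕ}
    (t : RTP G W bnd pwb) {x i : ℕ} (hv : x ∈ t.C i) : i ≤ t.m := by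
  by_contra h
  rw [t.hCsupp i (by omega)] at hv
  exact absurd hv (Finset.notMem_empty x)

/-- Gluing a child rooted tree-partition onto the root of another one. -/
lemma glueStep {V : Type} [DecidableEq V] {G : SimpleGraph V} {W₁ W₂ : Finset V}
    {bnd pwb : ℕ} (hpwb : 1 ≤ pwb)
    (t : RTP G W₁ bnd (pwb + 1)) (hroot : ∀ i ≤ t.m, 0 ∈ t.C i)
    (c : RTP G W₂ bnd pwb)
    (hdisj : Disjoint W₁ W₂)
    (hcross : ∀ ⦃v w : V⦄, G.Adj v w → v ∈ W₁ → w ∈ W₂ → v ∈ t.Bg 0 ∧ w ∈ c.Bg 0) :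
    ∃ t' : RTP G (W₁ ∪ W₂) bnd (pwb + 1),
      t'.Bg 0 = t.Bg 0 ∧ (∀ i ≤ t'.m, 0 ∈ t'.C i) := by
  classical
  set a := t.N + 1 with ha
  set b := t.m + 2 with hb
  set par' : ℕ → ℕ := fun x => if x ≤ t.N then t.par x
    else if x = a then 0 else a + c.par (x - a) with hpar'
  set Bg' : ℕ → Finset V := fun x => if x ≤ t.N then t.Bg x else c.Bg (x - a) with hBg'
  set C' : ℕ → Finset ℕ := fun i => if i ≤ t.m then t.C i
    else if i = t.m + 1 then {0, a}
    else if i ≤ b + c.m then insert 0 ((c.C (i - b)).image (· + a)) else ∅ with hC'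
  have hBg'lo : ∀ x, x ≤ t.N → Bg' x = t.Bg x := by
    intro x hx; simp only [hBg', if_pos hx]
  have hBg'hi : ∀ x, t.N < x → Bg' x = c.Bg (x - a) := by
    intro x hx; simp only [hBg']; rw [if_neg (show ¬ x ≤ t.N by omega)]
  -- membership in W₁ forces a `t`-home, in W₂ a `c`-home
  have homW₁ : ∀ v ∈ W₁, ∀ x, v ∈ Bg' x → x ≤ t.N ∧ v ∈ t.Bg x := by
    intro v hv x hx
    by_cases h : x ≤ t.N
    · rw [hBg'lo x h] at hx; exact ⟨h, hx⟩
    · rw [hBg'hi x (by omega)] at hx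
      have := c.hsub _ hx
      exact absurd hv (Finset.disjoint_right.mp hdisj this)
  have homW₂ : ∀ v ∈ W₂, ∀ x, v ∈ Bg' x → t.N < x ∧ v ∈ c.Bg (x - a) := by
    intro v hv x hx
    by_cases h : x ≤ t.N
    · rw [hBg'lo x h] at hx
      have := t.hsub _ hx
      exact absurd hv (Finset.disjoint_left.mp hdisj this)
    · rw [hBg'hi x (by omega)] at hx; exact ⟨by omega, hx⟩
  refine ⟨⟨t.N + 1 + c.N, b + c.m, par', Bg', C',
    ?_, ?_, ?_, ?_, ?_, ?_, ?_, ?_, ?_, ?_, ?_, ?_, ?_, ?_⟩, ?_, ?_⟩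
  · simp only [hpar', if_pos (Nat.zero_le _)]; exact t.hpar0
  · intro x hx
    simp only [hpar']
    by_cases h1 : x ≤ t.N
    · rw [if_pos h1]; exact t.hdec x hx
    · rw [if_neg h1]
      by_cases h2 : x = a
      · rw [if_pos h2]; omega
      · rw [if_neg h2]
        have := c.hdec (x - a) (by omega)
        omega
  · intro x hx
    rw [hBg'hi x (by omega)]
    exact c.hsupp _ (by omega)
  · intro x
    by_cases h1 : x ≤ t.N
    · rw [hBg'lo x h1]
      exact (t.hsub x).trans Finset.subset_union_left
    · rw [hBg'hi x (by omega)]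
      exact (c.hsub _).trans Finset.subset_union_right
  · intro v hv
    rcases Finset.mem_union.mp hv with hv1 | hv2
    · obtain ⟨x, hx, hux⟩ := t.huniq v hv1
      refine ⟨x, ?_, ?_⟩
      · show v ∈ Bg' x
        rw [hBg'lo x (home_le t hx)]; exact hx
      · intro y hy
        obtain ⟨hyle, hy'⟩ := homW₁ v hv1 y hy
        exact hux y hy'
    · obtain ⟨z, hz, huz⟩ := c.huniq v hv2
      refine ⟨z + a, ?_, ?_⟩
      · show v ∈ Bg' (z + a)
        rw [hBg'hi _ (show t.N < z + a by omega)]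
        simpa using hz
      · intro y hy
        obtain ⟨hylt, hy'⟩ := homW₂ v hv2 y hy
        have := huz _ hy'
        omega
  · intro v w hadj hv hw x y hx hy
    rcases Finset.mem_union.mp hv with hv1 | hv2 <;>
      rcases Finset.mem_union.mp hw with hw1 | hw2
    · -- both in W₁
      obtain ⟨hxle, hx'⟩ := homW₁ v hv1 x hx
      obtain ⟨hyle, hy'⟩ := homW₁ w hw1 y hy
      rcases t.hedge hadj hv1 hw1 hx' hy' with h | h | h
      · exact Or.inl h
      · refine Or.inr (Or.inl ?_); simp only [hpar', if_pos hxle]; exact h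
      · refine Or.inr (Or.inr ?_); simp only [hpar', if_pos hyle]; exact h
    · -- v ∈ W₁, w ∈ W₂ : cross edge
      obtain ⟨hv0, hw0⟩ := hcross hadj hv1 hw2
      obtain ⟨hxle, hx'⟩ := homW₁ v hv1 x hx
      obtain ⟨hylt, hy'⟩ := homW₂ w hw2 y hy
      have hx0 : x = 0 := by
        obtain ⟨x', hx'', hux⟩ := t.huniq v hv1
        have h1 := hux x hx'
        have h2 := hux 0 hv0
        omega
      have hy0 : y = a := by
        obtain ⟨z', hz'', huz⟩ := c.huniq w hw2
        have h1 := huz _ hy'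
        have h2 := huz _ hw0
        omega
      subst hx0; subst hy0
      refine Or.inr (Or.inr ?_)
      simp only [hpar']
      rw [if_neg (show ¬ a ≤ t.N by omega)]
      simp
    · -- v ∈ W₂, w ∈ W₁ : cross edge
      obtain ⟨hw0, hv0⟩ := hcross hadj.symm hw1 hv2
      obtain ⟨hxlt, hx'⟩ := homW₂ v hv2 x hx
      obtain ⟨hyle, hy'⟩ := homW₁ w hw1 y hy
      have hy0 : y = 0 := by
        obtain ⟨x', hx'', hux⟩ := t.huniq w hw1
        have h1 := hux y hy'
        have h2 := hux 0 hw0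
        omega
      have hx0 : x = a := by
        obtain ⟨z', hz'', huz⟩ := c.huniq v hv2
        have h1 := huz _ hx'
        have h2 := huz _ hv0
        omega
      subst hx0; subst hy0
      refine Or.inr (Or.inl ?_)
      simp only [hpar']
      rw [if_neg (show ¬ a ≤ t.N by omega)]
      simp
    · -- both in W₂
      obtain ⟨hxlt, hx'⟩ := homW₂ v hv2 x hx
      obtain ⟨hylt, hy'⟩ := homW₂ w hw2 y hy
      rcases c.hedge hadj hv2 hw2 hx' hy' with h | h | h
      · exact Or.inl (by omega)
      · by_cases hz : x - a = 0
        · rw [hz, c.hpar0] at h; exact Or.inl (by omega)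
        · refine Or.inr (Or.inl ?_)
          simp only [hpar', if_neg (by omega : ¬ x ≤ t.N), if_neg (by omega : ¬ x = a)]
          omega
      · by_cases hz : y - a = 0
        · rw [hz, c.hpar0] at h; exact Or.inl (by omega)
        · refine Or.inr (Or.inr ?_)
          simp only [hpar', if_neg (by omega : ¬ y ≤ t.N), if_neg (by omega : ¬ y = a)]
          omega
  · intro x
    by_cases h1 : x ≤ t.N
    · rw [hBg'lo x h1]; exact t.hcard x
    · rw [hBg'hi x (by omega)]; exact c.hcard _
  · simp only [hC', if_pos (Nat.zero_le _)]; exact t.hC0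
  · intro i hi
    simp only [hC', if_neg (by omega : ¬ i ≤ t.m), if_neg (by omega : ¬ i = t.m + 1),
      if_neg (by omega : ¬ i ≤ b + c.m)]
  · intro x hx
    by_cases h1 : x ≤ t.N
    · obtain ⟨i, hi⟩ := t.hCcover x h1
      refine ⟨i, ?_⟩
      simp only [hC', if_pos (block_le t hi)]
      exact hi
    · by_cases h2 : x = a
      · refine ⟨t.m + 1, ?_⟩
        simp only [hC', if_neg (by omega : ¬ t.m + 1 ≤ t.m), if_pos rfl]
        simp [h2]
      · obtain ⟨i, hi⟩ := c.hCcover (x - a) (by omega)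
        have hib := block_le c hi
        refine ⟨b + i, ?_⟩
        simp only [hC', if_neg (by omega : ¬ b + i ≤ t.m), if_neg (by omega : ¬ b + i = t.m + 1),
          if_pos (by omega : b + i ≤ b + c.m)]
        refine Finset.mem_insert_of_mem ?_
        rw [Finset.mem_image]
        exact ⟨x - a, by simpa using hi, by omega⟩
  · -- consecutiveness
    intro x i j l hij hjl hxi hxl
    -- characterize membership
    have hmem : ∀ (i : ℕ), x ∈ C' i ↔
        ((i ≤ t.m ∧ x ∈ t.C i) ∨ (i = t.m + 1 ∧ (x = 0 ∨ x = a)) ∨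
         (b ≤ i ∧ i ≤ b + c.m ∧ (x = 0 ∨ (a ≤ x ∧ x - a ∈ c.C (i - b))))) := by
      intro i'
      simp only [hC']
      by_cases h1 : i' ≤ t.m
      · simp only [if_pos h1]
        constructor
        · intro h; exact Or.inl ⟨h1, h⟩
        · rintro (⟨-, h⟩ | ⟨h, -⟩ | ⟨h, -, -⟩) <;> first | exact h | omega
      · rw [if_neg h1]
        by_cases h2 : i' = t.m + 1
        · rw [if_pos h2]
          simp only [Finset.mem_insert, Finset.mem_singleton]
          constructor
          · intro h; exact Or.inr (Or.inl ⟨h2, h⟩)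
          · rintro (⟨h, -⟩ | ⟨-, h⟩ | ⟨h, -, -⟩) <;> first | exact h | omega
        · rw [if_neg h2]
          by_cases h3 : i' ≤ b + c.m
          · rw [if_pos h3]
            simp only [Finset.mem_insert, Finset.mem_image]
            constructor
            · rintro (h | ⟨y, hy, rfl⟩)
              · exact Or.inr (Or.inr ⟨by omega, h3, Or.inl h⟩)
              · exact Or.inr (Or.inr ⟨by omega, h3, Or.inr ⟨by omega, by simpa using hy⟩⟩)
            · rintro (⟨h, -⟩ | ⟨h, -⟩ | ⟨-, -, (h | ⟨hax, h⟩)⟩)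
              · omega
              · omega
              · exact Or.inl h
              · exact Or.inr ⟨x - a, h, by omega⟩
          · rw [if_neg h3]
            simp only [Finset.notMem_empty, false_iff]
            rintro (⟨h, -⟩ | ⟨h, -⟩ | ⟨-, h, -⟩) <;> omega
    rw [hmem] at hxi hxl ⊢
    by_cases hx0 : x = 0
    · subst hx0
      -- 0 is in every block up to the end
      have hlbound : j ≤ b + c.m := by
        rcases hxl with ⟨h, -⟩ | ⟨h, -⟩ | ⟨-, h, -⟩ <;> omega
      by_cases h1 : j ≤ t.m
      · exact Or.inl ⟨h1, hroot j h1⟩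
      · by_cases h2 : j = t.m + 1
        · exact Or.inr (Or.inl ⟨h2, Or.inl rfl⟩)
        · refine Or.inr (Or.inr ⟨by omega, hlbound, Or.inl rfl⟩)
    · by_cases hxlo : x ≤ t.N
      · -- x lives only in t-blocks
        have hi' : i ≤ t.m ∧ x ∈ t.C i := by
          rcases hxi with h | ⟨-, h | h⟩ | ⟨-, -, h | ⟨hax, -⟩⟩ <;>
            first | exact h | omega
        have hl' : l ≤ t.m ∧ x ∈ t.C l := by
          rcases hxl with h | ⟨-, h | h⟩ | ⟨-, -, h | ⟨hax, -⟩⟩ <;>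
            first | exact h | omega
        exact Or.inl ⟨by omega, t.hCconsec x hij hjl hi'.2 hl'.2⟩
      · -- x ≥ a; lives in transition / child blocks
        have hxa : a ≤ x := by omega
        have hi' : t.m + 1 ≤ i := by
          rcases hxi with ⟨hle, h⟩ | ⟨h, -⟩ | ⟨h, -, -⟩
          · have := t.hCmem i x h; omega
          · omega
          · omega
        have hl'' : l ≤ b + c.m := by
          rcases hxl with ⟨hle, -⟩ | ⟨h, -⟩ | ⟨-, h, -⟩ <;> omega
        by_cases hj1 : j = t.m + 1
        · -- then i = t.m+1 as well, so x = a
          have : x = a := by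
            rcases hxi with ⟨hle, h⟩ | ⟨-, h | h⟩ | ⟨hbi, -, h | ⟨-, h⟩⟩
            · have := t.hCmem i x h; omega
            · omega
            · exact h
            · omega
            · -- i ≥ b but i ≤ j = t.m+1 : contradiction
              omega
          exact Or.inr (Or.inl ⟨hj1, Or.inr this⟩)
        · -- j ≥ b
          have hjb : b ≤ j := by omega
          -- get the c-side memberships
          have hcl : x - a ∈ c.C (l - b) := by
            rcases hxl with ⟨hle, h⟩ | ⟨hleq, h | h⟩ | ⟨-, -, h | ⟨-, h⟩⟩
            · have := t.hCmem l x h; omega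
            · omega
            · -- x = a at block t.m+1 = l, but j ≤ l and j ≥ b: contradiction
              omega
            · omega
            · exact h
          have hci : x - a ∈ c.C (i - b) ∨ (x = a ∧ i ≤ t.m + 1) := by
            rcases hxi with ⟨hle, h⟩ | ⟨hieq, h | h⟩ | ⟨-, -, h | ⟨-, h⟩⟩
            · have := t.hCmem i x h; omega
            · omega
            · exact Or.inr ⟨h, by omega⟩
            · omega
            · exact Or.inl h
          rcases hci with hci | ⟨hxa', hile⟩
          · refine Or.inr (Or.inr ⟨hjb, by omega, Or.inr ⟨hxa, ?_⟩⟩)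
            exact c.hCconsec (x - a) (by omega : i - b ≤ j - b) (by omega : j - b ≤ l - b) hci hcl
          · -- x = a: use c.hC0 (0 ∈ c.C 0) and consecutiveness from 0
            refine Or.inr (Or.inr ⟨hjb, by omega, Or.inr ⟨hxa, ?_⟩⟩)
            have h0 : x - a = 0 := by omega
            rw [h0]
            rw [h0] at hcl
            exact c.hCconsec 0 (Nat.zero_le _) (by omega : j - b ≤ l - b) c.hC0 hcl
  · -- edges of the tree are covered by the path decomposition
    intro x hx0 hxN
    by_cases h1 : x ≤ t.N
    · obtain ⟨i, hi1, hi2⟩ := t.hCedge x hx0 h1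
      have hib := block_le t hi1
      refine ⟨i, ?_, ?_⟩ <;> simp only [hC', if_pos hib]
      · exact hi1
      · simp only [hpar', if_pos h1]; exact hi2
    · by_cases h2 : x = a
      · refine ⟨t.m + 1, ?_, ?_⟩ <;>
          simp only [hC', if_neg (by omega : ¬ t.m + 1 ≤ t.m), if_pos rfl]
        · simp [h2]
        · simp only [hpar', if_neg (by omega : ¬ x ≤ t.N), if_pos h2]
          simp
      · obtain ⟨i, hi1, hi2⟩ := c.hCedge (x - a) (by omega) (by omega)
        have hib := block_le c hi1
        refine ⟨b + i, ?_, ?_⟩ <;>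
          simp only [hC', if_neg (by omega : ¬ b + i ≤ t.m),
            if_neg (by omega : ¬ b + i = t.m + 1), if_pos (by omega : b + i ≤ b + c.m)]
        · refine Finset.mem_insert_of_mem ?_
          rw [Finset.mem_image]
          exact ⟨x - a, by simpa using hi1, by omega⟩
        · refine Finset.mem_insert_of_mem ?_
          rw [Finset.mem_image]
          refine ⟨c.par (x - a), by simpa using hi2, ?_⟩
          simp only [hpar', if_neg (by omega : ¬ x ≤ t.N), if_neg h2]
          omega
  · intro i
    simp only [hC']
    by_cases h1 : i ≤ t.m
    · rw [if_pos h1]; exact t.hCcard i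
    · rw [if_neg h1]
      by_cases h2 : i = t.m + 1
      · rw [if_pos h2]
        have : ({0, a} : Finset ℕ).card ≤ 2 := by
          apply le_trans (Finset.card_insert_le _ _); simp
        omega
      · rw [if_neg h2]
        by_cases h3 : i ≤ b + c.m
        · rw [if_pos h3]
          apply le_trans (Finset.card_insert_le _ _)
          have := Finset.card_image_le (s := c.C (i - b)) (f := (· + a))
          have := c.hCcard (i - b)
          omega
        · rw [if_neg h3]; simp
  · intro i x hx
    simp only [hC'] at hx
    by_cases h1 : i ≤ t.m
    · rw [if_pos h1] at hx
      have := t.hCmem i x hx; omega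
    · rw [if_neg h1] at hx
      by_cases h2 : i = t.m + 1
      · rw [if_pos h2] at hx
        simp only [Finset.mem_insert, Finset.mem_singleton] at hx
        rcases hx with rfl | rfl <;> omega
      · rw [if_neg h2] at hx
        by_cases h3 : i ≤ b + c.m
        · rw [if_pos h3] at hx
          simp only [Finset.mem_insert, Finset.mem_image] at hx
          rcases hx with rfl | ⟨y, hy, rfl⟩
          · omega
          · have := c.hCmem (i - b) y hy; omega
        · rw [if_neg h3] at hx; simp at hx
  · show Bg' 0 = t.Bg 0
    rw [hBg'lo 0 (Nat.zero_le _)]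
  · intro i hi
    show (0:ℕ) ∈ C' i
    replace hi : i ≤ b + c.m := hi
    simp only [hC']
    by_cases h1 : i ≤ t.m
    · rw [if_pos h1]; exact hroot i h1
    · rw [if_neg h1]
      by_cases h2 : i = t.m + 1
      · rw [if_pos h2]; simp
      · rw [if_neg h2, if_pos (by omega)]; simp



def RTP.relax {V : Type} {G : SimpleGraph V} {W : Finset V} {b1 q1 : ℕ}
    (t : RTP G W b1 q1) {b2 q2 : ℕ} (hb : b1 ≤ b2) (hq : q1 ≤ q2) : RTP G W b2 q2 :=
  { t with
    hcard := fun x => le_trans (t.hcard x) hb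
    hCcard := fun i => le_trans (t.hCcard i) hq }

@[simp] lemma RTP.relax_Bg {V : Type} {G : SimpleGraph V} {W : Finset V} {b1 q1 : ℕ}
    (t : RTP G W b1 q1) {b2 q2 : ℕ} (hb : b1 ≤ b2) (hq : q1 ≤ q2) :
    (t.relax hb hq).Bg = t.Bg := rfl

/-- Enlarging the root bag of a rooted tree-partition by a set `cr`. -/
lemma addRoot {V : Type} [DecidableEq V] {G : SimpleGraph V} {U' W cr : Finset V}
    {b1 b2 pw : ℕ} (t : RTP G U' b1 pw)
    (hcover : ∀ v ∈ W, v ∈ cr ∨ v ∈ U')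
    (hcrW : cr ⊆ W) (hU'W : U' ⊆ W)
    (hdisj : ∀ v ∈ cr, v ∉ U')
    (hedgecr : ∀ ⦃v w : V⦄, G.Adj v w → v ∈ cr → w ∈ U' →
      ∃ y, w ∈ t.Bg y ∧ (y = 0 ∨ t.par y = 0))
    (hb : cr.card + (t.Bg 0).card ≤ b2) (hb1 : b1 ≤ b2) :
    ∃ t' : RTP G W b2 pw, t'.Bg 0 = cr ∪ t.Bg 0 ∧
      (∀ x, x ≠ 0 → t'.Bg x = t.Bg x) := by
  classical
  set Bg' : ℕ → Finset V := fun x => if x = 0 then cr ∪ t.Bg 0 else t.Bg x with hBg'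
  have hBg0 : Bg' 0 = cr ∪ t.Bg 0 := by simp [hBg']
  have hBgx : ∀ x, x ≠ 0 → Bg' x = t.Bg x := by
    intro x hx; simp [hBg', hx]
  -- homes
  have hhom : ∀ (v : V) (x : ℕ), v ∈ Bg' x → (x = 0 ∧ v ∈ cr) ∨ v ∈ t.Bg x := by
    intro v x hv
    by_cases hx : x = 0
    · subst hx
      rw [hBg0] at hv
      rcases Finset.mem_union.mp hv with h | h
      · exact Or.inl ⟨rfl, h⟩
      · exact Or.inr h
    · rw [hBgx x hx] at hv; exact Or.inr hv
  have hcrhome : ∀ v ∈ cr, ∀ x, v ∈ Bg' x → x = 0 := by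
    intro v hv x hx
    rcases hhom v x hx with ⟨h, -⟩ | h
    · exact h
    · exact absurd (t.hsub x h) (hdisj v hv)
  have hU'home : ∀ v ∈ U', ∀ x, v ∈ Bg' x → v ∈ t.Bg x := by
    intro v hv x hx
    rcases hhom v x hx with ⟨-, h⟩ | h
    · exact absurd hv (hdisj v h)
    · exact h
  refine ⟨⟨t.N, t.m, t.par, Bg', t.C,
    t.hpar0, t.hdec, ?_, ?_, ?_, ?_, ?_, t.hC0, t.hCsupp, t.hCcover, t.hCconsec,
    t.hCedge, t.hCcard, t.hCmem⟩, hBg0, hBgx⟩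
  · intro x hx
    rw [hBgx x (by omega)]
    exact t.hsupp x hx
  · intro x
    by_cases hx : x = 0
    · subst hx; rw [hBg0]
      exact Finset.union_subset hcrW ((t.hsub 0).trans hU'W)
    · rw [hBgx x hx]; exact (t.hsub x).trans hU'W
  · intro v hv
    rcases hcover v hv with hvc | hvu
    · refine ⟨0, ?_, ?_⟩
      · show v ∈ Bg' 0
        rw [hBg0]; exact Finset.mem_union_left _ hvc
      · intro y hy; exact hcrhome v hvc y hy
    · obtain ⟨x, hx, hux⟩ := t.huniq v hvu
      refine ⟨x, ?_, ?_⟩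
      · show v ∈ Bg' x
        by_cases h0 : x = 0
        · subst h0; rw [hBg0]; exact Finset.mem_union_right _ hx
        · rw [hBgx x h0]; exact hx
      · intro y hy
        exact hux y (hU'home v hvu y hy)
  · intro v w hadj hv hw x y hx hy
    rcases hcover v hv with hvc | hvu <;> rcases hcover w hw with hwc | hwu
    · exact Or.inl ((hcrhome v hvc x hx).trans (hcrhome w hwc y hy).symm)
    · -- v ∈ cr, w ∈ U'
      have hx0 := hcrhome v hvc x hx
      obtain ⟨y', hy', hy'or⟩ := hedgecr hadj hvc hwu
      obtain ⟨z, hz, huz⟩ := t.huniq w hwu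
      have h1 := huz y' hy'
      have h2 := huz y (hU'home w hwu y hy)
      subst hx0
      rcases hy'or with h | h
      · exact Or.inl (by omega)
      · refine Or.inr (Or.inr ?_)
        rw [h2, ← h1]
        exact h
    · -- w ∈ cr, v ∈ U'
      have hy0 := hcrhome w hwc y hy
      obtain ⟨x', hx', hx'or⟩ := hedgecr hadj.symm hwc hvu
      obtain ⟨z, hz, huz⟩ := t.huniq v hvu
      have h1 := huz x' hx'
      have h2 := huz x (hU'home v hvu x hx)
      subst hy0
      rcases hx'or with h | h
      · exact Or.inl (by omega)
      · refine Or.inr (Or.inl ?_)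
        rw [h2, ← h1]
        exact h
    · exact t.hedge hadj hvu hwu (hU'home v hvu x hx) (hU'home w hwu y hy)
  · intro x
    by_cases hx : x = 0
    · subst hx; rw [hBg0]
      calc (cr ∪ t.Bg 0).card ≤ cr.card + (t.Bg 0).card := Finset.card_union_le _ _
        _ ≤ b2 := hb
    · rw [hBgx x hx]
      exact le_trans (t.hcard x) hb1

/-- Attaching a child rooted tree-partition as a new child of the root,
where the path decomposition of the tree places the child's blocks after
the root's blocks (root occurs in all blocks up to the transition). -/
lemma glueChain {V : Type} [DecidableEq V] {G : SimpleGraph V} {W₁ W₂ : Finset V}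
    {b1 b2 b3 q : ℕ} (hq : 1 ≤ q) (hb1 : b1 ≤ b3) (hb2 : b2 ≤ b3)
    (t : RTP G W₁ b1 q) (c : RTP G W₂ b2 (q + 1))
    (hdisj : Disjoint W₁ W₂)
    (hcross : ∀ ⦃v w : V⦄, G.Adj v w → v ∈ W₁ → w ∈ W₂ → v ∈ t.Bg 0 ∧ w ∈ c.Bg 0) :
    ∃ t' : RTP G (W₁ ∪ W₂) b3 (q + 1),
      t'.Bg 0 = t.Bg 0 ∧ t'.Bg (t.N + 1) = c.Bg 0 ∧ t'.par (t.N + 1) = 0 ∧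
      (∀ x, x ≤ t.N → t'.Bg x = t.Bg x) := by
  classical
  set a := t.N + 1 with ha
  set b := t.m + 2 with hb
  set par' : ℕ → ℕ := fun x => if x ≤ t.N then t.par x
    else if x = a then 0 else a + c.par (x - a) with hpar'
  set Bg' : ℕ → Finset V := fun x => if x ≤ t.N then t.Bg x else c.Bg (x - a) with hBg'
  set C' : ℕ → Finset ℕ := fun i => if i ≤ t.m then insert 0 (t.C i)
    else if i = t.m + 1 then {0, a}
    else if i ≤ b + c.m then (c.C (i - b)).image (· + a) else ∅ with hC'
  have hBg'lo : ∀ x, x ≤ t.N → Bg' x = t.Bg x := by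
    intro x hx; simp only [hBg', if_pos hx]
  have hBg'hi : ∀ x, t.N < x → Bg' x = c.Bg (x - a) := by
    intro x hx; simp only [hBg']; rw [if_neg (show ¬ x ≤ t.N by omega)]
  have homW₁ : ∀ v ∈ W₁, ∀ x, v ∈ Bg' x → x ≤ t.N ∧ v ∈ t.Bg x := by
    intro v hv x hx
    by_cases h : x ≤ t.N
    · rw [hBg'lo x h] at hx; exact ⟨h, hx⟩
    · rw [hBg'hi x (by omega)] at hx
      have := c.hsub _ hx
      exact absurd hv (Finset.disjoint_right.mp hdisj this)
  have homW₂ : ∀ v ∈ W₂, ∀ x, v ∈ Bg' x → t.N < x ∧ v ∈ c.Bg (x - a) := by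
    intro v hv x hx
    by_cases h : x ≤ t.N
    · rw [hBg'lo x h] at hx
      have := t.hsub _ hx
      exact absurd hv (Finset.disjoint_left.mp hdisj this)
    · rw [hBg'hi x (by omega)] at hx; exact ⟨by omega, hx⟩
  refine ⟨⟨t.N + 1 + c.N, b + c.m, par', Bg', C',
    ?_, ?_, ?_, ?_, ?_, ?_, ?_, ?_, ?_, ?_, ?_, ?_, ?_, ?_⟩, ?_, ?_, ?_, ?_⟩
  · simp only [hpar', if_pos (Nat.zero_le _)]; exact t.hpar0
  · intro x hx
    simp only [hpar']
    by_cases h1 : x ≤ t.N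
    · rw [if_pos h1]; exact t.hdec x hx
    · rw [if_neg h1]
      by_cases h2 : x = a
      · rw [if_pos h2]; omega
      · rw [if_neg h2]
        have := c.hdec (x - a) (by omega)
        omega
  · intro x hx
    rw [hBg'hi x (by omega)]
    exact c.hsupp _ (by omega)
  · intro x
    by_cases h1 : x ≤ t.N
    · rw [hBg'lo x h1]
      exact (t.hsub x).trans Finset.subset_union_left
    · rw [hBg'hi x (by omega)]
      exact (c.hsub _).trans Finset.subset_union_right
  · intro v hv
    rcases Finset.mem_union.mp hv with hv1 | hv2
    · obtain ⟨x, hx, hux⟩ := t.huniq v hv1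
      refine ⟨x, ?_, ?_⟩
      · show v ∈ Bg' x
        rw [hBg'lo x (home_le t hx)]; exact hx
      · intro y hy
        obtain ⟨hyle, hy'⟩ := homW₁ v hv1 y hy
        exact hux y hy'
    · obtain ⟨z, hz, huz⟩ := c.huniq v hv2
      refine ⟨z + a, ?_, ?_⟩
      · show v ∈ Bg' (z + a)
        rw [hBg'hi _ (show t.N < z + a by omega)]
        simpa using hz
      · intro y hy
        obtain ⟨hylt, hy'⟩ := homW₂ v hv2 y hy
        have := huz _ hy'
        omega
  · intro v w hadj hv hw x y hx hy
    rcases Finset.mem_union.mp hv with hv1 | hv2 <;>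
      rcases Finset.mem_union.mp hw with hw1 | hw2
    · obtain ⟨hxle, hx'⟩ := homW₁ v hv1 x hx
      obtain ⟨hyle, hy'⟩ := homW₁ w hw1 y hy
      rcases t.hedge hadj hv1 hw1 hx' hy' with h | h | h
      · exact Or.inl h
      · refine Or.inr (Or.inl ?_); simp only [hpar', if_pos hxle]; exact h
      · refine Or.inr (Or.inr ?_); simp only [hpar', if_pos hyle]; exact h
    · obtain ⟨hv0, hw0⟩ := hcross hadj hv1 hw2
      obtain ⟨hxle, hx'⟩ := homW₁ v hv1 x hx
      obtain ⟨hylt, hy'⟩ := homW₂ w hw2 y hy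
      have hx0 : x = 0 := by
        obtain ⟨x', hx'', hux⟩ := t.huniq v hv1
        have h1 := hux x hx'
        have h2 := hux 0 hv0
        omega
      have hy0 : y = a := by
        obtain ⟨z', hz'', huz⟩ := c.huniq w hw2
        have h1 := huz _ hy'
        have h2 := huz _ hw0
        omega
      subst hx0; subst hy0
      refine Or.inr (Or.inr ?_)
      simp only [hpar']
      rw [if_neg (show ¬ a ≤ t.N by omega)]
      simp
    · obtain ⟨hw0, hv0⟩ := hcross hadj.symm hw1 hv2
      obtain ⟨hxlt, hx'⟩ := homW₂ v hv2 x hx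
      obtain ⟨hyle, hy'⟩ := homW₁ w hw1 y hy
      have hy0 : y = 0 := by
        obtain ⟨x', hx'', hux⟩ := t.huniq w hw1
        have h1 := hux y hy'
        have h2 := hux 0 hw0
        omega
      have hx0 : x = a := by
        obtain ⟨z', hz'', huz⟩ := c.huniq v hv2
        have h1 := huz _ hx'
        have h2 := huz _ hv0
        omega
      subst hx0; subst hy0
      refine Or.inr (Or.inl ?_)
      simp only [hpar']
      rw [if_neg (show ¬ a ≤ t.N by omega)]
      simp
    · obtain ⟨hxlt, hx'⟩ := homW₂ v hv2 x hx
      obtain ⟨hylt, hy'⟩ := homW₂ w hw2 y hy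
      rcases c.hedge hadj hv2 hw2 hx' hy' with h | h | h
      · exact Or.inl (by omega)
      · by_cases hz : x - a = 0
        · rw [hz, c.hpar0] at h; exact Or.inl (by omega)
        · refine Or.inr (Or.inl ?_)
          simp only [hpar', if_neg (by omega : ¬ x ≤ t.N), if_neg (by omega : ¬ x = a)]
          omega
      · by_cases hz : y - a = 0
        · rw [hz, c.hpar0] at h; exact Or.inl (by omega)
        · refine Or.inr (Or.inr ?_)
          simp only [hpar', if_neg (by omega : ¬ y ≤ t.N), if_neg (by omega : ¬ y = a)]
          omega
  · intro x
    by_cases h1 : x ≤ t.N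
    · rw [hBg'lo x h1]; exact le_trans (t.hcard x) hb1
    · rw [hBg'hi x (by omega)]; exact le_trans (c.hcard _) hb2
  · simp only [hC', if_pos (Nat.zero_le _)]
    exact Finset.mem_insert_self _ _
  · intro i hi
    simp only [hC', if_neg (by omega : ¬ i ≤ t.m), if_neg (by omega : ¬ i = t.m + 1),
      if_neg (by omega : ¬ i ≤ b + c.m)]
  · intro x hx
    by_cases h1 : x ≤ t.N
    · obtain ⟨i, hi⟩ := t.hCcover x h1
      refine ⟨i, ?_⟩
      simp only [hC', if_pos (block_le t hi)]
      exact Finset.mem_insert_of_mem hi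
    · by_cases h2 : x = a
      · refine ⟨t.m + 1, ?_⟩
        simp only [hC', if_neg (by omega : ¬ t.m + 1 ≤ t.m), if_pos rfl]
        simp [h2]
      · obtain ⟨i, hi⟩ := c.hCcover (x - a) (by omega)
        have hib := block_le c hi
        refine ⟨b + i, ?_⟩
        simp only [hC', if_neg (by omega : ¬ b + i ≤ t.m), if_neg (by omega : ¬ b + i = t.m + 1),
          if_pos (by omega : b + i ≤ b + c.m)]
        rw [Finset.mem_image]
        exact ⟨x - a, by simpa using hi, by omega⟩
  · -- consecutiveness
    intro x i j l hij hjl hxi hxl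
    have hmem : ∀ (i' : ℕ), x ∈ C' i' ↔
        ((i' ≤ t.m ∧ (x = 0 ∨ x ∈ t.C i')) ∨ (i' = t.m + 1 ∧ (x = 0 ∨ x = a)) ∨
         (b ≤ i' ∧ i' ≤ b + c.m ∧ a ≤ x ∧ x - a ∈ c.C (i' - b))) := by
      intro i'
      simp only [hC']
      by_cases h1 : i' ≤ t.m
      · simp only [if_pos h1, Finset.mem_insert]
        constructor
        · intro h; exact Or.inl ⟨h1, h⟩
        · rintro (⟨-, h⟩ | ⟨h, -⟩ | ⟨h, -, -⟩) <;> first | exact h | omega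
      · rw [if_neg h1]
        by_cases h2 : i' = t.m + 1
        · rw [if_pos h2]
          simp only [Finset.mem_insert, Finset.mem_singleton]
          constructor
          · intro h; exact Or.inr (Or.inl ⟨h2, h⟩)
          · rintro (⟨h, -⟩ | ⟨-, h⟩ | ⟨h, -, -⟩) <;> first | exact h | omega
        · rw [if_neg h2]
          by_cases h3 : i' ≤ b + c.m
          · rw [if_pos h3]
            simp only [Finset.mem_image]
            constructor
            · rintro ⟨y, hy, rfl⟩
              exact Or.inr (Or.inr ⟨by omega, h3, by omega, by simpa using hy⟩)
            · rintro (⟨h, -⟩ | ⟨h, -⟩ | ⟨-, -, hax, h⟩)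
              · omega
              · omega
              · exact ⟨x - a, h, by omega⟩
          · rw [if_neg h3]
            simp only [Finset.notMem_empty, false_iff]
            rintro (⟨h, -⟩ | ⟨h, -⟩ | ⟨-, h, -⟩) <;> omega
    rw [hmem] at hxi hxl ⊢
    by_cases hx0 : x = 0
    · subst hx0
      -- 0 appears only in blocks ≤ t.m+1
      have hlb : l ≤ t.m + 1 := by
        rcases hxl with ⟨h, -⟩ | ⟨h, -⟩ | ⟨-, -, h, -⟩ <;> omega
      by_cases h1 : j ≤ t.m
      · exact Or.inl ⟨h1, Or.inl rfl⟩
      · exact Or.inr (Or.inl ⟨by omega, Or.inl rfl⟩)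
    · by_cases hxlo : x ≤ t.N
      · have hxt : x ∈ t.C i ∧ i ≤ t.m := by
          rcases hxi with ⟨h1, h | h⟩ | ⟨-, h | h⟩ | ⟨-, -, hax, -⟩ <;>
            first | exact ⟨h, h1⟩ | omega
        have hlt : x ∈ t.C l ∧ l ≤ t.m := by
          rcases hxl with ⟨h1, h | h⟩ | ⟨-, h | h⟩ | ⟨-, -, hax, -⟩ <;>
            first | exact ⟨h, h1⟩ | omega
        exact Or.inl ⟨by omega, Or.inr (t.hCconsec x hij hjl hxt.1 hlt.1)⟩
      · have hxa : a ≤ x := by omega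
        have hi' : t.m + 1 ≤ i := by
          rcases hxi with ⟨hle, h | h⟩ | ⟨h, -⟩ | ⟨h, -, -⟩
          · omega
          · have := t.hCmem i x h; omega
          · omega
          · omega
        have hl'' : l ≤ b + c.m := by
          rcases hxl with ⟨hle, -⟩ | ⟨h, -⟩ | ⟨-, h, -⟩ <;> omega
        by_cases hj1 : j = t.m + 1
        · have : x = a := by
            rcases hxi with ⟨hle, h | h⟩ | ⟨-, h | h⟩ | ⟨hbi, -, -, h⟩
            · omega
            · have := t.hCmem i x h; omega
            · omega
            · exact h
            · omega
          exact Or.inr (Or.inl ⟨hj1, Or.inr this⟩)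
        · have hjb : b ≤ j := by omega
          have hcl : x - a ∈ c.C (l - b) := by
            rcases hxl with ⟨hle, h | h⟩ | ⟨hleq, h | h⟩ | ⟨-, -, -, h⟩
            · omega
            · have := t.hCmem l x h; omega
            · omega
            · omega
            · exact h
          have hci : x - a ∈ c.C (i - b) ∨ (x = a ∧ i ≤ t.m + 1) := by
            rcases hxi with ⟨hle, h | h⟩ | ⟨hieq, h | h⟩ | ⟨-, -, -, h⟩
            · omega
            · have := t.hCmem i x h; omega
            · omega
            · exact Or.inr ⟨h, by omega⟩
            · exact Or.inl h
          rcases hci with hci | ⟨hxa', hile⟩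
          · refine Or.inr (Or.inr ⟨hjb, by omega, hxa, ?_⟩)
            exact c.hCconsec (x - a) (by omega : i - b ≤ j - b) (by omega : j - b ≤ l - b) hci hcl
          · refine Or.inr (Or.inr ⟨hjb, by omega, hxa, ?_⟩)
            have h0 : x - a = 0 := by omega
            rw [h0]
            rw [h0] at hcl
            exact c.hCconsec 0 (Nat.zero_le _) (by omega : j - b ≤ l - b) c.hC0 hcl
  · intro x hx0 hxN
    by_cases h1 : x ≤ t.N
    · obtain ⟨i, hi1, hi2⟩ := t.hCedge x hx0 h1
      have hib := block_le t hi1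
      refine ⟨i, ?_, ?_⟩ <;> simp only [hC', if_pos hib]
      · exact Finset.mem_insert_of_mem hi1
      · simp only [hpar', if_pos h1]
        exact Finset.mem_insert_of_mem hi2
    · by_cases h2 : x = a
      · refine ⟨t.m + 1, ?_, ?_⟩ <;>
          simp only [hC', if_neg (by omega : ¬ t.m + 1 ≤ t.m), if_pos rfl]
        · simp [h2]
        · simp only [hpar']
          rw [if_neg (show ¬ x ≤ t.N by omega), if_pos h2]
          simp
      · obtain ⟨i, hi1, hi2⟩ := c.hCedge (x - a) (by omega) (by omega)
        have hib := block_le c hi1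
        refine ⟨b + i, ?_, ?_⟩ <;>
          simp only [hC', if_neg (by omega : ¬ b + i ≤ t.m),
            if_neg (by omega : ¬ b + i = t.m + 1), if_pos (by omega : b + i ≤ b + c.m)]
        · rw [Finset.mem_image]
          exact ⟨x - a, by simpa using hi1, by omega⟩
        · rw [Finset.mem_image]
          refine ⟨c.par (x - a), by simpa using hi2, ?_⟩
          simp only [hpar', if_neg (by omega : ¬ x ≤ t.N), if_neg h2]
          omega
  · intro i
    simp only [hC']
    by_cases h1 : i ≤ t.m
    · rw [if_pos h1]
      apply le_trans (Finset.card_insert_le _ _)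
      have := t.hCcard i
      omega
    · rw [if_neg h1]
      by_cases h2 : i = t.m + 1
      · rw [if_pos h2]
        have : ({0, a} : Finset ℕ).card ≤ 2 := by
          apply le_trans (Finset.card_insert_le _ _); simp
        omega
      · rw [if_neg h2]
        by_cases h3 : i ≤ b + c.m
        · rw [if_pos h3]
          have h4 := Finset.card_image_le (s := c.C (i - b)) (f := (· + a))
          have h5 := c.hCcard (i - b)
          omega
        · rw [if_neg h3]; simp
  · intro i x hx
    simp only [hC'] at hx
    by_cases h1 : i ≤ t.m
    · rw [if_pos h1] at hx
      rcases Finset.mem_insert.mp hx with rfl | hx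
      · omega
      · have := t.hCmem i x hx; omega
    · rw [if_neg h1] at hx
      by_cases h2 : i = t.m + 1
      · rw [if_pos h2] at hx
        simp only [Finset.mem_insert, Finset.mem_singleton] at hx
        rcases hx with rfl | rfl <;> omega
      · rw [if_neg h2] at hx
        by_cases h3 : i ≤ b + c.m
        · rw [if_pos h3] at hx
          simp only [Finset.mem_image] at hx
          obtain ⟨y, hy, rfl⟩ := hx
          have := c.hCmem (i - b) y hy; omega
        · rw [if_neg h3] at hx; simp at hx
  · show Bg' 0 = t.Bg 0
    rw [hBg'lo 0 (Nat.zero_le _)]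
  · show Bg' a = c.Bg 0
    rw [hBg'hi a (by omega)]
    simp
  · show par' a = 0
    simp only [hpar']
    rw [if_neg (show ¬ a ≤ t.N by omega)]
    simp
  · intro x hx
    show Bg' x = t.Bg x
    exact hBg'lo x hx

def AuxStmt (kk d : ℕ) : Prop :=
  ∀ (V : Type) (_ : Fintype V) (_ : DecidableEq V) (G : SimpleGraph V),
    MaxDegLE G d → ∀ (B : ℕ → Finset V) (U : Finset V) (n : ℕ),
      PDon G B U (kk + 2) n → ∀ p r : ℕ, p < r →
        ∀ W : Finset V, (∀ v, v ∈ W ↔ v ∈ U ∧ ∀ j, v ∈ B j → p < j ∧ j < r) →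
          ∃ t : RTP G W (2 * (kk + 2) + fRec kk d (4 * d * (kk + 2))) (2 * kk + 3),
            ∀ v ∈ W, ∀ w : V, G.Adj v w → w ∈ U → w ∉ W → v ∈ t.Bg 0

lemma PDon_inter {V : Type} [DecidableEq V] {G : SimpleGraph V} {B : ℕ → Finset V}
    {U : Finset V} {w n : ℕ} (hpd : PDon G B U w n) (U' : Finset V) (hU' : U' ⊆ U)
    {w' : ℕ} (hwidth : ∀ j, (B j ∩ U').card ≤ w') :
    PDon G (fun j => B j ∩ U') U' w' n := by
  constructor
  · intro j; exact Finset.inter_subset_right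
  · intro v w' hadj hv hw
    obtain ⟨j, h1, h2⟩ := hpd.hedge hadj (hU' hv) (hU' hw)
    exact ⟨j, Finset.mem_inter.mpr ⟨h1, hv⟩, Finset.mem_inter.mpr ⟨h2, hw⟩⟩
  · intro v hv
    obtain ⟨j, hj⟩ := hpd.hcover v (hU' hv)
    exact ⟨j, Finset.mem_inter.mpr ⟨hj, hv⟩⟩
  · intro v i j l hij hjl hvi hvl
    rw [Finset.mem_inter] at hvi hvl ⊢
    exact ⟨hpd.hconsec v hij hjl hvi.1 hvl.1, hvi.2⟩
  · exact hwidth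
  · intro j hj; rw [hpd.hbound j hj, Finset.empty_inter]
  · rw [hpd.hzero, Finset.empty_inter]

lemma aux_lemma (kk d : ℕ) (ihmain : MainStmt kk d) : AuxStmt kk d := by
  have H : ∀ (fuel : ℕ) (V : Type) (iV : Fintype V) (dV : DecidableEq V) (G : SimpleGraph V),
      MaxDegLE G d → ∀ (B : ℕ → Finset V) (U : Finset V) (n : ℕ),
      PDon G B U (kk + 2) n → ∀ p r : ℕ, p < r → r - p ≤ fuel →
      ∀ W : Finset V, (∀ v, v ∈ W ↔ v ∈ U ∧ ∀ j, v ∈ B j → p < j ∧ j < r) →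
        ∃ t : RTP G W (2 * (kk + 2) + fRec kk d (4 * d * (kk + 2))) (2 * kk + 3),
          ∀ v ∈ W, ∀ w : V, G.Adj v w → w ∈ U → w ∉ W → v ∈ t.Bg 0 := by
    intro fuel
    induction fuel with
    | zero =>
      intro V iV dV G hdeg B U n hpd p r hpr hfuel W hW
      omega
    | succ fuel ih =>
      intro V iV dV G hdeg B U n hpd p r hpr hfuel W hW
      classical
      have hWU : ∀ v ∈ W, v ∈ U := fun v hv => ((hW v).mp hv).1
      have hWsub : W ⊆ U := fun v hv => hWU v hv
      have hWbag : ∀ v ∈ W, ∀ j, v ∈ B j → p < j ∧ j < r := fun v hv => ((hW v).mp hv).2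
      have hBpW : ∀ v ∈ B p, v ∉ W := by
        intro v hv hvW
        have := hWbag v hvW p hv; omega
      have hBrW : ∀ v ∈ B r, v ∉ W := by
        intro v hv hvW
        have := hWbag v hvW r hv; omega
      have hWout : ∀ v ∈ W, ∀ w, G.Adj v w → w ∈ U → w ∉ W → w ∈ B p ∨ w ∈ B r := by
        intro v hv w hadj hwU hwW
        obtain ⟨j, hvj, hwj⟩ := hpd.hedge hadj (hWU v hv) hwU
        obtain ⟨hj1, hj2⟩ := hWbag v hv j hvj
        have hex : ∃ j', w ∈ B j' ∧ (j' ≤ p ∨ r ≤ j') := by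
          by_contra hcon
          push_neg at hcon
          refine hwW ((hW w).mpr ⟨hwU, ?_⟩)
          intro j' hj'
          have := hcon j' hj'
          omega
        obtain ⟨j', hwj', hj'⟩ := hex
        rcases hj' with h | h
        · exact Or.inl (hpd.hconsec w h (by omega) hwj' hwj)
        · exact Or.inr (hpd.hconsec w (by omega : j ≤ r) h hwj hwj')
      -- small helpers for width bounds
      have hwit : ∀ (j : ℕ) (U₀ : Finset V), U₀ ⊆ W → ∀ x, x ∈ B j → x ∉ W →
          (B j ∩ U₀).card ≤ kk + 1 := by
        intro j U₀ hU₀ x hxj hxW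
        have hsub2 : B j ∩ U₀ ⊆ (B j).erase x := by
          intro y hy
          rw [Finset.mem_erase]
          rw [Finset.mem_inter] at hy
          exact ⟨fun he => hxW (he ▸ (hU₀ hy.2)), hy.1⟩
        have h3 := Finset.card_le_card hsub2
        rw [Finset.card_erase_of_mem hxj] at h3
        have := hpd.hwidth j
        omega
      have hempty : ∀ (j : ℕ) (U₀ : Finset V), U₀ ⊆ W → ¬(p < j ∧ j < r) →
          B j ∩ U₀ = ∅ := by
        intro j U₀ hU₀ hj
        rw [Finset.eq_empty_iff_forall_notMem]
        intro y hy
        rw [Finset.mem_inter] at hy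
        exact hj (hWbag y (hU₀ hy.2) j hy.1)
      have harith : ∀ a : ℕ, a ≤ 4 → (a * (kk + 2)) * d ≤ 4 * d * (kk + 2) := by
        intro a ha
        calc (a * (kk + 2)) * d = a * (d * (kk + 2)) := by ring
          _ ≤ 4 * (d * (kk + 2)) := mul_le_mul_left ha _
          _ = 4 * d * (kk + 2) := by ring
      have hfilter_card : ∀ (X U₀ : Finset V) (a : ℕ), a ≤ 4 → X.card ≤ a * (kk + 2) →
          (U₀.filter (fun v => ∃ w ∈ X, G.Adj v w)).card ≤ 4 * d * (kk + 2) := by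
        intro X U₀ a ha hX
        calc (U₀.filter (fun v => ∃ w ∈ X, G.Adj v w)).card ≤ X.card * d :=
              deg_count hdeg X U₀
          _ ≤ (a * (kk + 2)) * d := mul_le_mul_left hX _
          _ ≤ 4 * d * (kk + 2) := harith a ha
      by_cases hterm : ∀ j, p < j → j < r → ((B j ∩ B p).Nonempty ∨ (B j ∩ B r).Nonempty)
      · -- TERMINAL CASE: a single main call on all of W
        set S' := W.filter (fun v => ∃ w ∈ B p ∪ B r, G.Adj v w) with hS'
        have hS'card : S'.card ≤ 4 * d * (kk + 2) := by
          refine hfilter_card _ _ 2 (by omega) ?_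
          have h1 := hpd.hwidth p
          have h2 := hpd.hwidth r
          have := Finset.card_union_le (B p) (B r)
          omega
        have hwidth' : ∀ j, (B j ∩ W).card ≤ kk + 1 := by
          intro j
          by_cases hj : p < j ∧ j < r
          · rcases hterm j hj.1 hj.2 with ⟨x, hx⟩ | ⟨x, hx⟩ <;> rw [Finset.mem_inter] at hx
            · exact hwit j W le_rfl x hx.1 (hBpW x hx.2)
            · exact hwit j W le_rfl x hx.1 (hBrW x hx.2)
          · rw [hempty j W le_rfl hj, Finset.card_empty]; omega
        have hpd' := PDon_inter hpd W hWsub hwidth'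
        obtain ⟨tm, hrootm⟩ := ihmain V iV dV G hdeg _ W n hpd' S' (Finset.filter_subset _ _)
        refine ⟨tm.relax (le_trans (fRec_mono kk d hS'card) (by omega)) (by omega), ?_⟩
        intro v hv w hadj hwU hwW
        have hw' := hWout v hv w hadj hwU hwW
        have hvS' : v ∈ S' := by
          rw [hS', Finset.mem_filter]
          exact ⟨hv, w, Finset.mem_union.mpr hw', hadj⟩
        exact hrootm hvS'
      · -- NON-TERMINAL
        push_neg at hterm
        obtain ⟨j₀, hj₀1, hj₀2, hj₀p, hj₀r⟩ := hterm
        set PP := (Finset.range r).filter (fun j => p < j ∧ B j ∩ B p = ∅) with hPP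
        have hPPne : PP.Nonempty :=
          ⟨j₀, by rw [hPP, Finset.mem_filter, Finset.mem_range]; exact ⟨hj₀2, hj₀1, hj₀p⟩⟩
        set RR := (Finset.range r).filter (fun j => p < j ∧ B j ∩ B r = ∅) with hRR
        have hRRne : RR.Nonempty :=
          ⟨j₀, by rw [hRR, Finset.mem_filter, Finset.mem_range]; exact ⟨hj₀2, hj₀1, hj₀r⟩⟩
        set p' := PP.min' hPPne with hp'def
        set r' := RR.max' hRRne with hr'def
        have hp'mem : p' < r ∧ p < p' ∧ B p' ∩ B p = ∅ := by
          have h0 := PP.min'_mem hPPne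
          have h2 : p' ∈ Finset.filter (fun j => p < j ∧ B j ∩ B p = ∅) (Finset.range r) := h0
          rw [Finset.mem_filter, Finset.mem_range] at h2
          exact ⟨h2.1, h2.2.1, h2.2.2⟩
        have hr'mem : r' < r ∧ p < r' ∧ B r' ∩ B r = ∅ := by
          have h0 := RR.max'_mem hRRne
          have h2 : r' ∈ Finset.filter (fun j => p < j ∧ B j ∩ B r = ∅) (Finset.range r) := h0
          rw [Finset.mem_filter, Finset.mem_range] at h2
          exact ⟨h2.1, h2.2.1, h2.2.2⟩
        have hp'min : ∀ j, p < j → j < p' → (B j ∩ B p).Nonempty := by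
          intro j h1 h2
          by_contra hc
          rw [Finset.not_nonempty_iff_eq_empty] at hc
          have hjPP : j ∈ PP := by
            rw [hPP, Finset.mem_filter, Finset.mem_range]
            exact ⟨by omega, h1, hc⟩
          have := PP.min'_le j hjPP
          omega
        have hr'max : ∀ j, r' < j → j < r → (B j ∩ B r).Nonempty := by
          intro j h1 h2
          by_contra hc
          rw [Finset.not_nonempty_iff_eq_empty] at hc
          have hjRR : j ∈ RR := by
            rw [hRR, Finset.mem_filter, Finset.mem_range]
            exact ⟨by omega, by omega, hc⟩
          have := RR.le_max' j hjRR
          omega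
        have hp'r' : p' ≤ r' := by
          have h1 := PP.min'_le j₀ (by
            rw [hPP, Finset.mem_filter, Finset.mem_range]; exact ⟨hj₀2, hj₀1, hj₀p⟩)
          have h2 := RR.le_max' j₀ (by
            rw [hRR, Finset.mem_filter, Finset.mem_range]; exact ⟨hj₀2, hj₀1, hj₀r⟩)
          omega
        by_cases hcase : p' = r'
        · -- SUBCASE B1 : single middle boundary p' = r'
          set U' := W.filter (fun v => v ∉ B p') with hU'
          set cr := B p' ∩ W with hcr
          have hU'W : U' ⊆ W := Finset.filter_subset _ _
          have hcrW : cr ⊆ W := Finset.inter_subset_right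
          have hcrU' : ∀ v ∈ cr, v ∉ U' := by
            intro v hv hv'
            rw [hcr, Finset.mem_inter] at hv
            rw [hU', Finset.mem_filter] at hv'
            exact hv'.2 hv.1
          have hcover : ∀ v ∈ W, v ∈ cr ∨ v ∈ U' := by
            intro v hv
            by_cases h : v ∈ B p'
            · exact Or.inl (by rw [hcr, Finset.mem_inter]; exact ⟨h, hv⟩)
            · exact Or.inr (by rw [hU', Finset.mem_filter]; exact ⟨hv, h⟩)
          have hwidth' : ∀ j, (B j ∩ U').card ≤ kk + 1 := by
            intro j
            by_cases hj : p < j ∧ j < r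
            · rcases Nat.lt_trichotomy j p' with h | h | h
              · obtain ⟨x, hx⟩ := hp'min j hj.1 h
                rw [Finset.mem_inter] at hx
                exact hwit j U' hU'W x hx.1 (hBpW x hx.2)
              · have hje : B j ∩ U' = ∅ := by
                  rw [Finset.eq_empty_iff_forall_notMem]
                  intro y hy
                  rw [Finset.mem_inter] at hy
                  have h2 := hy.2
                  rw [hU', Finset.mem_filter] at h2
                  rw [h] at hy
                  exact h2.2 hy.1
                rw [hje, Finset.card_empty]; omega
              · obtain ⟨x, hx⟩ := hr'max j (by omega) hj.2
                rw [Finset.mem_inter] at hx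
                exact hwit j U' hU'W x hx.1 (hBrW x hx.2)
            · rw [hempty j U' hU'W hj, Finset.card_empty]; omega
          set S' := U'.filter (fun v => ∃ w ∈ B p ∪ B p' ∪ B r, G.Adj v w) with hS'
          have hS'card : S'.card ≤ 4 * d * (kk + 2) := by
            refine hfilter_card _ _ 3 (by omega) ?_
            have h1 := hpd.hwidth p
            have h2 := hpd.hwidth p'
            have h3 := hpd.hwidth r
            have h4 := Finset.card_union_le (B p) (B p')
            have h5 := Finset.card_union_le (B p ∪ B p') (B r)
            omega
          have hpd' := PDon_inter hpd U' (hU'W.trans hWsub) hwidth'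
          obtain ⟨tm, hrootm⟩ := ihmain V iV dV G hdeg _ U' n hpd' S' (Finset.filter_subset _ _)
          set t0 := tm.relax (le_refl (fRec kk d S'.card)) (by omega : 2 * kk + 2 ≤ 2 * kk + 3) with ht0
          have ht0Bg : t0.Bg = tm.Bg := rfl
          have hedgecr : ∀ ⦃v w : V⦄, G.Adj v w → v ∈ cr → w ∈ U' →
              ∃ y, w ∈ t0.Bg y ∧ (y = 0 ∨ t0.par y = 0) := by
            intro v w hadj hvcr hwU'
            have hwS' : w ∈ S' := by
              rw [hS', Finset.mem_filter]
              refine ⟨hwU', v, ?_, hadj.symm⟩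
              rw [hcr, Finset.mem_inter] at hvcr
              rw [Finset.mem_union, Finset.mem_union]
              exact Or.inl (Or.inr hvcr.1)
            exact ⟨0, hrootm hwS', Or.inl rfl⟩
          have hcrcard : cr.card ≤ kk + 2 := by
            have h1 : cr.card ≤ (B p').card := Finset.card_le_card Finset.inter_subset_left
            have := hpd.hwidth p'
            omega
          have hrb : cr.card + (t0.Bg 0).card ≤ 2 * (kk + 2) + fRec kk d (4 * d * (kk + 2)) := by
            have h1 := tm.hcard 0
            have h2 := fRec_mono kk d hS'card
            have h3 : (t0.Bg 0).card = (tm.Bg 0).card := rfl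
            omega
          obtain ⟨t', ht'0, ht'x⟩ := addRoot t0 hcover hcrW hU'W hcrU' hedgecr hrb
            (le_trans (fRec_mono kk d hS'card) (by omega))
          refine ⟨t', ?_⟩
          intro v hv w hadj hwU hwW
          have hw' := hWout v hv w hadj hwU hwW
          rcases hcover v hv with hvc | hvu
          · rw [ht'0]; exact Finset.mem_union_left _ hvc
          · have hvS' : v ∈ S' := by
              rw [hS', Finset.mem_filter]
              refine ⟨hvu, w, ?_, hadj⟩
              rw [Finset.mem_union, Finset.mem_union]
              rcases hw' with h | h
              · exact Or.inl (Or.inl h)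
              · exact Or.inr h
            rw [ht'0]
            exact Finset.mem_union_right _ (hrootm hvS')
        · -- SUBCASE B2 : recursive zip step, p' < r'
          have hplr : p' < r' := by omega
          set U' := W.filter (fun v => ∀ j, v ∈ B j → (j < p' ∨ r' < j)) with hU'
          set W'' := W.filter (fun v => ∀ j, v ∈ B j → (p' < j ∧ j < r')) with hW''
          set cr := (B p' ∪ B r') ∩ W with hcr
          have hU'W : U' ⊆ W := Finset.filter_subset _ _
          have hW''W : W'' ⊆ W := Finset.filter_subset _ _
          have hcrW : cr ⊆ W := Finset.inter_subset_right
          have hW''char : ∀ v, v ∈ W'' ↔ v ∈ U ∧ ∀ j, v ∈ B j → p' < j ∧ j < r' := by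
            intro v
            rw [hW'', Finset.mem_filter]
            constructor
            · intro ⟨h1, h2⟩; exact ⟨hWU v h1, h2⟩
            · intro ⟨h1, h2⟩
              refine ⟨(hW v).mpr ⟨h1, ?_⟩, h2⟩
              intro j hj
              have := h2 j hj
              omega
          -- child from the inner induction
          obtain ⟨tc, hcontc⟩ := ih V iV dV G hdeg B U n hpd p' r' hplr (by omega) W'' hW''char
          -- main call on U'
          have hwidth' : ∀ j, (B j ∩ U').card ≤ kk + 1 := by
            intro j
            by_cases hj : p < j ∧ j < r
            · by_cases hjp : j < p'
              · obtain ⟨x, hx⟩ := hp'min j hj.1 hjp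
                rw [Finset.mem_inter] at hx
                exact hwit j U' hU'W x hx.1 (hBpW x hx.2)
              · by_cases hjr : r' < j
                · obtain ⟨x, hx⟩ := hr'max j hjr hj.2
                  rw [Finset.mem_inter] at hx
                  exact hwit j U' hU'W x hx.1 (hBrW x hx.2)
                · -- p' ≤ j ≤ r' : empty
                  have : B j ∩ U' = ∅ := by
                    rw [Finset.eq_empty_iff_forall_notMem]
                    intro y hy
                    rw [Finset.mem_inter] at hy
                    have hy2 := hy.2
                    rw [hU', Finset.mem_filter] at hy2
                    have := hy2.2 j hy.1
                    omega
                  rw [this, Finset.card_empty]; omega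
            · rw [hempty j U' hU'W hj, Finset.card_empty]; omega
          set S' := U'.filter (fun v => ∃ w ∈ B p ∪ B p' ∪ B r' ∪ B r, G.Adj v w) with hS'
          have hS'card : S'.card ≤ 4 * d * (kk + 2) := by
            refine hfilter_card _ _ 4 (by omega) ?_
            have h1 := hpd.hwidth p
            have h2 := hpd.hwidth p'
            have h3 := hpd.hwidth r'
            have h4 := hpd.hwidth r
            have h5 := Finset.card_union_le (B p) (B p')
            have h6 := Finset.card_union_le (B p ∪ B p') (B r')
            have h7 := Finset.card_union_le (B p ∪ B p' ∪ B r') (B r)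
            omega
          have hpd' := PDon_inter hpd U' (hU'W.trans hWsub) hwidth'
          obtain ⟨tm, hrootm⟩ := ihmain V iV dV G hdeg _ U' n hpd' S' (Finset.filter_subset _ _)
          -- U' and W'' are disjoint, with no edges between them
          have hdisjUW : Disjoint U' W'' := by
            rw [Finset.disjoint_left]
            intro v hv hv'
            rw [hU', Finset.mem_filter] at hv
            rw [hW'', Finset.mem_filter] at hv'
            obtain ⟨j, hj⟩ := hpd.hcover v (hWU v hv.1)
            have h1 := hv.2 j hj
            have h2 := hv'.2 j hj
            omega
          have hnoedge : ∀ ⦃v w : V⦄, G.Adj v w → v ∈ U' → w ∈ W'' → False := by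
            intro v w hadj hv hw
            rw [hU', Finset.mem_filter] at hv
            rw [hW'', Finset.mem_filter] at hw
            obtain ⟨j, hj1, hj2⟩ := hpd.hedge hadj (hWU v hv.1) (hWU w hw.1)
            have h1 := hv.2 j hj1
            have h2 := hw.2 j hj2
            omega
          obtain ⟨tg, hg0, hga, hgpar, hglo⟩ := glueChain (q := 2 * kk + 2) (by omega)
            (le_trans (fRec_mono kk d hS'card) (by omega : fRec kk d (4 * d * (kk + 2)) ≤
              2 * (kk + 2) + fRec kk d (4 * d * (kk + 2))))
            le_rfl tm tc hdisjUW
            (fun v w hadj hv hw => absurd (hnoedge hadj hv hw) not_false)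
          -- add the crossing vertices to the root
          have hcrdisj : ∀ v ∈ cr, v ∉ U' ∪ W'' := by
            intro v hv hv'
            rw [hcr, Finset.mem_inter, Finset.mem_union] at hv
            rcases Finset.mem_union.mp hv' with h | h
            · rw [hU', Finset.mem_filter] at h
              rcases hv.1 with h1 | h1
              · have := h.2 p' h1; omega
              · have := h.2 r' h1; omega
            · rw [hW'', Finset.mem_filter] at h
              rcases hv.1 with h1 | h1
              · have := h.2 p' h1; omega
              · have := h.2 r' h1; omega
          have hcover : ∀ v ∈ W, v ∈ cr ∨ v ∈ U' ∪ W'' := by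
            intro v hv
            by_cases h : v ∈ B p' ∨ v ∈ B r'
            · exact Or.inl (by
                rw [hcr, Finset.mem_inter, Finset.mem_union]; exact ⟨h, hv⟩)
            · push_neg at h
              refine Or.inr ?_
              rw [Finset.mem_union, hU', hW'', Finset.mem_filter, Finset.mem_filter]
              by_cases h2 : ∀ j, v ∈ B j → (j < p' ∨ r' < j)
              · exact Or.inl ⟨hv, h2⟩
              · push_neg at h2
                obtain ⟨j1, hj1, hj1a, hj1b⟩ := h2
                -- p' ≤ j1 ≤ r' and v ∉ B p', B r' so p' < j1 < r'
                have hj1c : p' < j1 ∧ j1 < r' := by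
                  rcases Nat.lt_trichotomy j1 p' with h3 | h3 | h3
                  · omega
                  · exact absurd (h3 ▸ hj1) h.1
                  · rcases Nat.lt_trichotomy j1 r' with h4 | h4 | h4
                    · exact ⟨h3, h4⟩
                    · exact absurd (h4 ▸ hj1) h.2
                    · omega
                refine Or.inr ⟨hv, ?_⟩
                intro j2 hj2
                rcases Nat.lt_trichotomy j2 p' with h3 | h3 | h3
                · exfalso
                  exact h.1 (hpd.hconsec v (le_of_lt h3) (le_of_lt hj1c.1) hj2 hj1)
                · exact absurd (h3 ▸ hj2) h.1
                · rcases Nat.lt_trichotomy j2 r' with h4 | h4 | h4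
                  · exact ⟨h3, h4⟩
                  · exact absurd (h4 ▸ hj2) h.2
                  · exfalso
                    exact h.2 (hpd.hconsec v (le_of_lt hj1c.2) (le_of_lt h4) hj1 hj2)
          have hedgecr : ∀ ⦃v w : V⦄, G.Adj v w → v ∈ cr → w ∈ U' ∪ W'' →
              ∃ y, w ∈ tg.Bg y ∧ (y = 0 ∨ tg.par y = 0) := by
            intro v w hadj hvcr hw
            rw [hcr, Finset.mem_inter] at hvcr
            rcases Finset.mem_union.mp hw with hwu | hww
            · refine ⟨0, ?_, Or.inl rfl⟩
              rw [hg0]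
              apply hrootm
              rw [hS', Finset.mem_filter]
              refine ⟨hwu, v, ?_, hadj.symm⟩
              rw [Finset.mem_union, Finset.mem_union, Finset.mem_union]
              rcases Finset.mem_union.mp hvcr.1 with h | h
              · exact Or.inl (Or.inl (Or.inr h))
              · exact Or.inl (Or.inr h)
            · refine ⟨tm.N + 1, ?_, Or.inr hgpar⟩
              rw [hga]
              refine hcontc w hww v hadj.symm (hWU v (hcrW (by
                rw [hcr, Finset.mem_inter]; exact hvcr))) ?_
              intro hvW''
              exact hcrdisj v (by rw [hcr, Finset.mem_inter]; exact hvcr)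
                (Finset.mem_union_right _ hvW'')
          have hcrcard : cr.card ≤ 2 * (kk + 2) := by
            have h1 : cr.card ≤ (B p' ∪ B r').card :=
              Finset.card_le_card Finset.inter_subset_left
            have h2 := Finset.card_union_le (B p') (B r')
            have h3 := hpd.hwidth p'
            have h4 := hpd.hwidth r'
            omega
          have hrb : cr.card + (tg.Bg 0).card ≤ 2 * (kk + 2) + fRec kk d (4 * d * (kk + 2)) := by
            have h1 : (tg.Bg 0).card = (tm.Bg 0).card := by rw [hg0]
            have h2 := tm.hcard 0
            have h3 := fRec_mono kk d hS'card
            omega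
          obtain ⟨t', ht'0, ht'x⟩ := addRoot tg hcover hcrW
            (Finset.union_subset hU'W hW''W) hcrdisj hedgecr hrb le_rfl
          refine ⟨t', ?_⟩
          intro v hv w hadj hwU hwW
          have hw' := hWout v hv w hadj hwU hwW
          rcases hcover v hv with hvc | hvuw
          · rw [ht'0]; exact Finset.mem_union_left _ hvc
          · rcases Finset.mem_union.mp hvuw with hvu | hvw
            · have hvS' : v ∈ S' := by
                rw [hS', Finset.mem_filter]
                refine ⟨hvu, w, ?_, hadj⟩
                rw [Finset.mem_union, Finset.mem_union, Finset.mem_union]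
                rcases hw' with h | h
                · exact Or.inl (Or.inl (Or.inl h))
                · exact Or.inr h
              rw [ht'0, hg0]
              exact Finset.mem_union_right _ (hrootm hvS')
            · -- v ∈ W'' cannot have a neighbour in B p or B r
              exfalso
              rw [hW'', Finset.mem_filter] at hvw
              obtain ⟨j, hj1, hj2⟩ := hpd.hedge hadj (hWU v hv) hwU
              have hjv := hvw.2 j hj1
              rcases hw' with h | h
              · have hwp' : w ∈ B p' := hpd.hconsec w (by omega : p ≤ p') (by omega) h hj2
                have : w ∈ B p' ∩ B p := Finset.mem_inter.mpr ⟨hwp', h⟩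
                rw [hp'mem.2.2] at this
                exact absurd this (Finset.notMem_empty w)
              · have hwr' : w ∈ B r' := hpd.hconsec w (by omega : j ≤ r') (by omega) hj2 h
                have : w ∈ B r' ∩ B r := Finset.mem_inter.mpr ⟨hwr', h⟩
                rw [hr'mem.2.2] at this
                exact absurd this (Finset.notMem_empty w)
  intro V iV dV G hdeg B U n hpd p r hpr W hW
  exact H (r - p) V iV dV G hdeg B U n hpd p r hpr le_rfl W hW

lemma main_succ (kk d : ℕ) (ihmain : MainStmt kk d) : MainStmt (kk + 1) d := by
  have haux := aux_lemma kk d ihmain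
  intro V iV dV G hdeg B U n hpd S hS
  classical
  have hfeq : fRec (kk + 1) d S.card =
      max (S.card * (kk + 2)) (2 * (kk + 2) + fRec kk d (4 * d * (kk + 2))) := rfl
  -- the index of a bag containing a given vertex
  set idx : V → ℕ := fun v => if h : ∃ j, v ∈ B j then Classical.choose h else 0 with hidxdef
  have hidxU : ∀ v ∈ U, v ∈ B (idx v) := by
    intro v hv
    have hex := hpd.hcover v hv
    simp only [hidxdef, dif_pos hex]
    exact Classical.choose_spec hex
  set I := S.image idx with hI
  set R := I.biUnion (fun i => B i) with hR
  have hRU : R ⊆ U := by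
    intro v hv
    rw [hR, Finset.mem_biUnion] at hv
    obtain ⟨i, -, hi⟩ := hv
    exact hpd.hsub i hi
  have hSR : S ⊆ R := by
    intro v hv
    rw [hR, Finset.mem_biUnion]
    exact ⟨idx v, Finset.mem_image_of_mem idx hv, hidxU v (hS hv)⟩
  have hRcard : R.card ≤ S.card * (kk + 2) := by
    calc R.card ≤ ∑ i ∈ I, (B i).card := Finset.card_biUnion_le
      _ ≤ ∑ _i ∈ I, (kk + 2) := Finset.sum_le_sum (fun i _ => hpd.hwidth i)
      _ = I.card * (kk + 2) := by rw [Finset.sum_const, smul_eq_mul]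
      _ ≤ S.card * (kk + 2) := mul_le_mul_left (Finset.card_image_le) _
  set L := insert 0 (insert n I) with hL
  have h0L : (0 : ℕ) ∈ L := Finset.mem_insert_self _ _
  have hnL : n ∈ L := Finset.mem_insert_of_mem (Finset.mem_insert_self _ _)
  have hIrange : ∀ i ∈ I, 0 < i ∧ i < n := by
    intro i hi
    rw [hI, Finset.mem_image] at hi
    obtain ⟨v, hvS, rfl⟩ := hi
    have hmem := hidxU v (hS hvS)
    constructor
    · rcases Nat.eq_zero_or_pos (idx v) with h | h
      · rw [h, hpd.hzero] at hmem; exact absurd hmem (Finset.notMem_empty v)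
      · exact h
    · by_contra h
      rw [hpd.hbound (idx v) (by omega)] at hmem
      exact absurd hmem (Finset.notMem_empty v)
  have hLn : ∀ l ∈ L, l ≤ n := by
    intro l hl
    rw [hL, Finset.mem_insert, Finset.mem_insert] at hl
    rcases hl with rfl | rfl | h
    · omega
    · omega
    · have := hIrange l h; omega
  -- the next boundary after a
  set nxt : ℕ → ℕ := fun a =>
    if h : (L.filter (fun l => a < l)).Nonempty then (L.filter (fun l => a < l)).min' h
    else a + 1 with hnxt
  have hnxtspec : ∀ a, a < n →
      (a < nxt a ∧ nxt a ∈ L ∧ ∀ l ∈ L, a < l → nxt a ≤ l) := by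
    intro a ha
    have hne : (L.filter (fun l => a < l)).Nonempty :=
      ⟨n, by rw [Finset.mem_filter]; exact ⟨hnL, ha⟩⟩
    simp only [hnxt, dif_pos hne]
    have hmem := (L.filter (fun l => a < l)).min'_mem hne
    rw [Finset.mem_filter] at hmem
    refine ⟨hmem.2, hmem.1, ?_⟩
    intro l hl hal
    exact Finset.min'_le _ l (by rw [Finset.mem_filter]; exact ⟨hl, hal⟩)
  -- gap vertex sets
  set Wa : ℕ → Finset V :=
    fun a => U.filter (fun v => ∀ j, v ∈ B j → a < j ∧ j < nxt a) with hWa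
  have hWaU : ∀ a, Wa a ⊆ U := fun a => Finset.filter_subset _ _
  have hWachar : ∀ a v, v ∈ Wa a ↔ v ∈ U ∧ ∀ j, v ∈ B j → a < j ∧ j < nxt a := by
    intro a v
    rw [hWa, Finset.mem_filter]
  -- each gap has a rooted tree-partition
  have hchild : ∀ a, a ∈ L → a < n →
      ∃ c : RTP G (Wa a) (2 * (kk + 2) + fRec kk d (4 * d * (kk + 2))) (2 * kk + 3),
        ∀ v ∈ Wa a, ∀ w : V, G.Adj v w → w ∈ U → w ∉ Wa a → v ∈ c.Bg 0 := by
    intro a haL han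
    exact haux V iV dV G hdeg B U n hpd a (nxt a) (hnxtspec a han).1 (Wa a) (hWachar a)
  -- R is disjoint from every gap, gaps are pairwise disjoint
  have hRWa : ∀ a, a ∈ L → ∀ v ∈ R, v ∉ Wa a := by
    intro a haL v hvR hvW
    rw [hR, Finset.mem_biUnion] at hvR
    obtain ⟨i, hiI, hvi⟩ := hvR
    rw [hWachar] at hvW
    have h1 := hvW.2 i hvi
    have h2 : i ∈ L := by
      rw [hL]; exact Finset.mem_insert_of_mem (Finset.mem_insert_of_mem hiI)
    have han : a < n := by
      have h3 := hIrange i hiI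
      omega
    have := (hnxtspec a han).2.2 i h2 h1.1
    omega
  have hWadisj : ∀ a a', a ∈ L → a < n → a' ∈ L → a' < n → a ≠ a' → ∀ v ∈ Wa a, v ∉ Wa a' := by
    intro a a' haL han ha'L ha'n hne v hv hv'
    rw [hWachar] at hv hv'
    obtain ⟨j, hj⟩ := hpd.hcover v hv.1
    have h1 := hv.2 j hj
    have h2 := hv'.2 j hj
    rcases Nat.lt_or_ge a a' with h | h
    · have := (hnxtspec a han).2.2 a' ha'L h
      omega
    · have halt : a' < a := by omega
      have := (hnxtspec a' ha'n).2.2 a haL halt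
      omega
  -- no edges between distinct gaps
  have hWaedge : ∀ a a', a ∈ L → a < n → a' ∈ L → a' < n → a ≠ a' →
      ∀ ⦃v w : V⦄, G.Adj v w → v ∈ Wa a → w ∈ Wa a' → False := by
    intro a a' haL han ha'L ha'n hne v w hadj hv hw
    rw [hWachar] at hv hw
    obtain ⟨j, hj1, hj2⟩ := hpd.hedge hadj hv.1 hw.1
    have h1 := hv.2 j hj1
    have h2 := hw.2 j hj2
    rcases Nat.lt_or_ge a a' with h | h
    · have := (hnxtspec a han).2.2 a' ha'L h
      omega
    · have halt : a' < a := by omega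
      have := (hnxtspec a' ha'n).2.2 a haL halt
      omega
  -- accumulate over gaps
  have ACC : ∀ F : Finset ℕ, F ⊆ L.filter (fun a => a < n) →
      ∃ t : RTP G (R ∪ F.biUnion Wa) (fRec (kk + 1) d S.card) (2 * (kk + 1) + 2),
        t.Bg 0 = R ∧ (∀ i ≤ t.m, 0 ∈ t.C i) := by
    intro F
    induction F using Finset.induction_on with
    | empty =>
      intro _hsub
      set Bg0 : ℕ → Finset V := fun x => if x = 0 then R else ∅ with hBg0d
      set C0 : ℕ → Finset ℕ := fun i => if i = 0 then {0} else ∅ with hC0d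
      have hBg0mem : ∀ (v : V) (x : ℕ), v ∈ Bg0 x ↔ x = 0 ∧ v ∈ R := by
        intro v x
        simp only [hBg0d]
        by_cases h : x = 0
        · rw [if_pos h]; simp [h]
        · rw [if_neg h]; simp [h]
      have hC0mem : ∀ (y i : ℕ), y ∈ C0 i ↔ i = 0 ∧ y = 0 := by
        intro y i
        simp only [hC0d]
        by_cases h : i = 0
        · rw [if_pos h]; simp [h]
        · rw [if_neg h]; simp [h]
      refine ⟨⟨0, 0, fun _ => 0, Bg0, C0,
        rfl, ?_, ?_, ?_, ?_, ?_, ?_, ?_, ?_, ?_, ?_, ?_, ?_, ?_⟩, ?_, ?_⟩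
      · intro x hx; show (0:ℕ) < x; omega
      · intro x hx
        rw [Finset.eq_empty_iff_forall_notMem]
        intro v hv
        rw [hBg0mem] at hv
        omega
      · intro x v hv
        rw [hBg0mem] at hv
        exact Finset.mem_union_left _ hv.2
      · intro v hv
        have hvR : v ∈ R := by
          rcases Finset.mem_union.mp hv with h | h
          · exact h
          · rw [Finset.biUnion_empty] at h
            exact absurd h (Finset.notMem_empty v)
        refine ⟨0, (hBg0mem v 0).mpr ⟨rfl, hvR⟩, ?_⟩
        intro y hy
        exact ((hBg0mem v y).mp hy).1
      · intro v w hadj hv hw x y hx hy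
        rw [hBg0mem] at hx hy
        exact Or.inl (hx.1.trans hy.1.symm)
      · intro x
        simp only [hBg0d]
        by_cases h : x = 0
        · rw [if_pos h, hfeq]
          exact le_trans hRcard (le_max_left _ _)
        · rw [if_neg h]; simp
      · exact (hC0mem 0 0).mpr ⟨rfl, rfl⟩
      · intro i hi
        rw [Finset.eq_empty_iff_forall_notMem]
        intro y hy
        rw [hC0mem] at hy
        omega
      · intro x hx
        exact ⟨0, (hC0mem x 0).mpr ⟨rfl, by omega⟩⟩
      · intro x i j l hij hjl hxi hxl
        rw [hC0mem] at hxi hxl ⊢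
        omega
      · intro x hx0 hxN
        omega
      · intro i
        simp only [hC0d]
        by_cases h : i = 0
        · rw [if_pos h, Finset.card_singleton]; omega
        · rw [if_neg h]; simp
      · intro i x hx
        rw [hC0mem] at hx
        omega
      · show Bg0 0 = R
        simp [hBg0d]
      · intro i hi
        have hi0 : i = 0 := Nat.le_zero.mp hi
        exact (hC0mem 0 i).mpr ⟨hi0, rfl⟩
    | @insert a F haF ihF =>
      intro hsubF
      have haL : a ∈ L ∧ a < n := by
        have := hsubF (Finset.mem_insert_self a F)
        rw [Finset.mem_filter] at this
        exact this
      have hFsub : F ⊆ L.filter (fun a => a < n) :=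
        fun x hx => hsubF (Finset.mem_insert_of_mem hx)
      obtain ⟨t, htBg0, htroot⟩ := ihF hFsub
      obtain ⟨c, hcontact⟩ := hchild a haL.1 haL.2
      set c' := c.relax (b2 := fRec (kk + 1) d S.card)
        (by rw [hfeq]; exact le_max_right _ _) (le_refl (2 * kk + 3)) with hc'
      have hc'Bg : c'.Bg = c.Bg := rfl
      have hdisj : Disjoint (R ∪ F.biUnion Wa) (Wa a) := by
        rw [Finset.disjoint_left]
        intro v hv hva
        rcases Finset.mem_union.mp hv with h | h
        · exact hRWa a haL.1 v h hva
        · rw [Finset.mem_biUnion] at h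
          obtain ⟨a', ha'F, hva'⟩ := h
          have ha'L : a' ∈ L ∧ a' < n := by
            have := hFsub ha'F
            rw [Finset.mem_filter] at this
            exact this
          have hne : a' ≠ a := fun he => haF (he ▸ ha'F)
          exact hWadisj a' a ha'L.1 ha'L.2 haL.1 haL.2 hne v hva' hva
      have hcross : ∀ ⦃v w : V⦄, G.Adj v w → v ∈ R ∪ F.biUnion Wa → w ∈ Wa a →
          v ∈ t.Bg 0 ∧ w ∈ c'.Bg 0 := by
        intro v w hadj hv hw
        rcases Finset.mem_union.mp hv with h | h
        · refine ⟨by rw [htBg0]; exact h, ?_⟩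
          rw [hc'Bg]
          refine hcontact w hw v hadj.symm (hRU h) ?_
          exact hRWa a haL.1 v h
        · exfalso
          rw [Finset.mem_biUnion] at h
          obtain ⟨a', ha'F, hva'⟩ := h
          have ha'L : a' ∈ L ∧ a' < n := by
            have := hFsub ha'F
            rw [Finset.mem_filter] at this
            exact this
          have hne : a' ≠ a := fun he => haF (he ▸ ha'F)
          exact hWaedge a' a ha'L.1 ha'L.2 haL.1 haL.2 hne hadj hva' hw
      obtain ⟨t', ht'Bg0, ht'root⟩ := glueStep (pwb := 2 * kk + 3) (by omega)
        (t.relax le_rfl (by omega)) htroot c' hdisj hcross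
      have hWeq : R ∪ (insert a F).biUnion Wa = (R ∪ F.biUnion Wa) ∪ Wa a := by
        rw [Finset.biUnion_insert]
        ext v
        simp only [Finset.mem_union]
        tauto
      rw [hWeq]
      refine ⟨t'.relax le_rfl (by omega), ?_, ?_⟩
      · rw [show (t'.relax le_rfl (by omega : 2*kk+3+1 ≤ 2*(kk+1)+2)).Bg = t'.Bg from rfl,
          ht'Bg0]
        rw [show (t.relax le_rfl (by omega : 2*(kk+1)+2 ≤ 2*kk+3+1)).Bg = t.Bg from rfl]
        exact htBg0
      · exact ht'root
  -- conclude: the gaps together with R cover U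
  obtain ⟨t, htBg0, -⟩ := ACC (L.filter (fun a => a < n)) le_rfl
  have hUeq : R ∪ (L.filter (fun a => a < n)).biUnion Wa = U := by
    apply Finset.Subset.antisymm
    · intro v hv
      rcases Finset.mem_union.mp hv with h | h
      · exact hRU h
      · rw [Finset.mem_biUnion] at h
        obtain ⟨a, -, hva⟩ := h
        exact (hWaU a) hva
    · intro v hv
      rw [Finset.mem_union]
      by_cases hvR : v ∈ R
      · exact Or.inl hvR
      · refine Or.inr ?_
        rw [Finset.mem_biUnion]
        -- the bag indices of v avoid L, find its gap
        have hvB := hidxU v hv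
        have hLnotv : ∀ l ∈ L, v ∉ B l := by
          intro l hl hvl
          rw [hL, Finset.mem_insert, Finset.mem_insert] at hl
          rcases hl with rfl | rfl | hlI
          · rw [hpd.hzero] at hvl; exact absurd hvl (Finset.notMem_empty v)
          · rw [hpd.hbound l le_rfl] at hvl; exact absurd hvl (Finset.notMem_empty v)
          · exact hvR (by
              rw [hR, Finset.mem_biUnion]; exact ⟨l, hlI, hvl⟩)
        have hidxn : idx v < n := by
          by_contra h
          rw [hpd.hbound (idx v) (by omega)] at hvB
          exact absurd hvB (Finset.notMem_empty v)
        have hidx0 : 0 < idx v := by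
          rcases Nat.eq_zero_or_pos (idx v) with h | h
          · rw [h, hpd.hzero] at hvB; exact absurd hvB (Finset.notMem_empty v)
          · exact h
        have hgne : (L.filter (fun l => l < idx v)).Nonempty :=
          ⟨0, by rw [Finset.mem_filter]; exact ⟨h0L, hidx0⟩⟩
        set a := (L.filter (fun l => l < idx v)).max' hgne with hadef
        have haspec : a ∈ L ∧ a < idx v := by
          have h0 := (L.filter (fun l => l < idx v)).max'_mem hgne
          have h2 : a ∈ L.filter (fun l => l < idx v) := h0
          rw [Finset.mem_filter] at h2
          exact h2
        have hamax : ∀ l ∈ L, l < idx v → l ≤ a := by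
          intro l hl hlv
          exact Finset.le_max' _ l (by rw [Finset.mem_filter]; exact ⟨hl, hlv⟩)
        have han : a < n := by omega
        refine ⟨a, by rw [Finset.mem_filter]; exact ⟨haspec.1, han⟩, ?_⟩
        rw [hWachar]
        refine ⟨hv, ?_⟩
        have hb := hnxtspec a han
        -- nxt a is at least idx v
        have hbv : idx v < nxt a + 1 ∧ idx v ≤ nxt a := by
          constructor
          · by_contra h
            have h2 : nxt a < idx v := by omega
            have := hamax (nxt a) hb.2.1 h2
            omega
          · by_contra h
            have h2 : nxt a < idx v := by omega
            have := hamax (nxt a) hb.2.1 h2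
            omega
        intro j hvj
        constructor
        · by_contra h
          have hja : j ≤ a := by omega
          have : v ∈ B a := hpd.hconsec v hja (le_of_lt haspec.2) hvj hvB
          exact hLnotv a haspec.1 this
        · by_contra h
          have hjb : nxt a ≤ j := by omega
          have hbv2 : idx v < nxt a := by
            rcases Nat.lt_or_ge (idx v) (nxt a) with h2 | h2
            · exact h2
            · have h3 : idx v ≠ nxt a := by
                intro he
                exact hLnotv (nxt a) hb.2.1 (he ▸ hvB)
              have h4 : nxt a < idx v := by omega
              have := hamax (nxt a) hb.2.1 h4
              omega
          have : v ∈ B (nxt a) := hpd.hconsec v (le_of_lt hbv2) hjb hvB hvj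
          exact hLnotv (nxt a) hb.2.1 this
  rw [← hUeq]
  exact ⟨t, hSR.trans (by rw [htBg0])⟩

lemma main_all (k d : ℕ) : MainStmt k d := by
  induction k with
  | zero => exact main_zero d
  | succ k ih => exact main_succ k d ih

/-- For every graph `G` with pathwidth at most `k` and maximum
degree at most `d`, and every set `S` of vertices of `G`, there exist a tree `T`
with pathwidth at most `2k + 1` and a `T`-partition `(B_x : x ∈ V(T))` of `G`
such that every bag has size at most `f(k, d, |S|)` and `S ⊆ B_r` for some
node `r` of `T`. -/
theorem stmt11 {V : Type} (G : SimpleGraph V) (k d : ℕ)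
    (hpw : PWle G k) (hdeg : MaxDegLE G d) (S : Finset V) :
    ∃ (ι : Type) (T : SimpleGraph ι), T.IsTree ∧ PWle T (2 * k + 1) ∧
      ∃ B : ι → Finset V, IsTreePartition T G B ∧
        (∀ x, (B x).card ≤ fRec k d S.card) ∧
        ∃ r : ι, S ⊆ B r := by
  classical
  obtain ⟨n0, B0, hpos, ⟨hsub0, hedge0, hcover0, hconsec0⟩, hwidth0⟩ := hpw
  -- V is finite
  have hfin : Finite V := by
    have hcov : (Set.univ : Set V) ⊆ ⋃ i : Fin n0, ↑(B0 i) := by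
      intro v _
      obtain ⟨i, hi⟩ := hcover0 v (Set.mem_univ v)
      exact Set.mem_iUnion.mpr ⟨i, hi⟩
    have hfu : (Set.univ : Set V).Finite :=
      Set.Finite.subset (Set.finite_iUnion (fun i => (B0 i).finite_toSet)) hcov
    exact Set.finite_univ_iff.mp hfu
  haveI : Fintype V := Fintype.ofFinite V
  set Bn : ℕ → Finset V :=
    fun j => if h : 1 ≤ j ∧ j ≤ n0 then B0 ⟨j - 1, by omega⟩ else ∅ with hBn
  have hBnmem : ∀ (j : ℕ) (v : V), v ∈ Bn j ↔
      ∃ h : 1 ≤ j ∧ j ≤ n0, v ∈ B0 ⟨j - 1, by omega⟩ := by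
    intro j v
    simp only [hBn]
    by_cases h : 1 ≤ j ∧ j ≤ n0
    · rw [dif_pos h]
      constructor
      · intro hv; exact ⟨h, hv⟩
      · intro h'; exact h'.choose_spec
    · rw [dif_neg h]
      simp only [Finset.notMem_empty, false_iff]
      rintro ⟨h', -⟩
      exact h h'
  have hBn_eq : ∀ i : Fin n0, Bn (i.val + 1) = B0 i := by
    intro i
    have hcond : 1 ≤ i.val + 1 ∧ i.val + 1 ≤ n0 := ⟨by omega, by have := i.isLt; omega⟩
    simp only [hBn]
    rw [dif_pos hcond]
    congr 1 <;> exact Fin.ext (by simp)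
  have hpd : PDon G Bn Finset.univ (k + 1) (n0 + 1) := by
    constructor
    · intro j; exact Finset.subset_univ _
    · intro v w hadj _ _
      obtain ⟨i, h1, h2⟩ := hedge0 hadj (Set.mem_univ v) (Set.mem_univ w)
      refine ⟨i.val + 1, ?_, ?_⟩ <;> rw [hBn_eq i] <;> assumption
    · intro v _
      obtain ⟨i, hi⟩ := hcover0 v (Set.mem_univ v)
      exact ⟨i.val + 1, by rw [hBn_eq i]; exact hi⟩
    · intro v i j l hij hjl hvi hvl
      obtain ⟨hi, hvi'⟩ := (hBnmem i v).mp hvi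
      obtain ⟨hl, hvl'⟩ := (hBnmem l v).mp hvl
      have hj : 1 ≤ j ∧ j ≤ n0 := ⟨by omega, by omega⟩
      refine (hBnmem j v).mpr ⟨hj, ?_⟩
      refine hconsec0 v ⟨i - 1, by omega⟩ ⟨j - 1, by omega⟩ ⟨l - 1, by omega⟩ ?_ ?_ hvi' hvl'
      · show i - 1 ≤ j - 1; omega
      · show j - 1 ≤ l - 1; omega
    · intro j
      by_cases h : 1 ≤ j ∧ j ≤ n0
      · simp only [hBn]
        rw [dif_pos h]
        exact hwidth0 _
      · simp only [hBn]
        rw [dif_neg h]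
        simp
    · intro j hj
      simp only [hBn]
      rw [dif_neg (by omega)]
    · simp only [hBn]
      rw [dif_neg (by omega)]
  obtain ⟨t, hSroot⟩ := main_all k d V ‹Fintype V› (Classical.decEq V) G hdeg Bn Finset.univ (n0 + 1) hpd S
    (Finset.subset_univ S)
  refine ⟨Fin (t.N + 1), ptree t.N t.par, ptree_isTree t.N t.par t.hpar0 t.hdec, ?_, ?_⟩
  · -- pathwidth of the tree
    refine ⟨t.m + 1,
      fun i => (t.C i.val).attachFin (fun x hx => by have := t.hCmem i.val x hx; omega),
      by omega, ⟨?_, ?_, ?_, ?_⟩, ?_⟩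
    · intro i x _
      exact Set.mem_univ x
    · intro x y hadj _ _
      rw [ptree_adj] at hadj
      obtain ⟨hne, hor⟩ := hadj
      rcases hor with h | h
      · have hx0 : x.val ≠ 0 := by
          intro h0
          apply hne
          rw [h0, t.hpar0] at h
          exact Fin.ext (by omega)
        obtain ⟨i, h1, h2⟩ := t.hCedge x.val hx0 (by have := x.isLt; omega)
        have hib := block_le t h1
        refine ⟨⟨i, by omega⟩, ?_, ?_⟩ <;> rw [Finset.mem_attachFin]
        · exact h1
        · rw [h] at h2; exact h2
      · have hy0 : y.val ≠ 0 := by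
          intro h0
          apply hne
          rw [h0, t.hpar0] at h
          exact Fin.ext (by omega)
        obtain ⟨i, h1, h2⟩ := t.hCedge y.val hy0 (by have := y.isLt; omega)
        have hib := block_le t h1
        refine ⟨⟨i, by omega⟩, ?_, ?_⟩ <;> rw [Finset.mem_attachFin]
        · rw [h] at h2; exact h2
        · exact h1
    · intro x _
      obtain ⟨i, hi⟩ := t.hCcover x.val (by have := x.isLt; omega)
      have hib := block_le t hi
      exact ⟨⟨i, by omega⟩, by rw [Finset.mem_attachFin]; exact hi⟩
    · intro x i j l hij hjl hxi hxl
      rw [Finset.mem_attachFin] at hxi hxl ⊢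
      exact t.hCconsec x.val hij hjl hxi hxl
    · intro i
      rw [Finset.card_attachFin]
      have := t.hCcard i.val
      omega
  · refine ⟨fun x => t.Bg x.val, ⟨?_, ?_⟩, ?_, ⟨0, ?_⟩⟩
    · intro v
      obtain ⟨x, hx, hux⟩ := t.huniq v (Finset.mem_univ v)
      have hxle := home_le t hx
      refine ⟨⟨x, by omega⟩, hx, ?_⟩
      intro y hy
      have h2 := hux y.val hy
      exact Fin.ext h2
    · intro v w hadj x y hx hy
      rcases t.hedge hadj (Finset.mem_univ v) (Finset.mem_univ w) hx hy with h | h | h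
      · exact Or.inl (Fin.ext h)
      · by_cases hxy : x = y
        · exact Or.inl hxy
        · refine Or.inr ?_
          rw [ptree_adj]
          exact ⟨hxy, Or.inl h⟩
      · by_cases hxy : x = y
        · exact Or.inl hxy
        · refine Or.inr ?_
          rw [ptree_adj]
          exact ⟨hxy, Or.inr h⟩
    · intro x
      exact t.hcard x.val
    · exact hSroot
end

section
/- For every i ≥ 1 and n ≥ 1, the tree G_i (defined recursively below) has maximum degree at most 3 and pathwidth at most i. -/
/-- Vertex type of the tree `G_{i+1}` built with parameter `n`:
`G_1` is an `n`-vertex path; `G_{i+1}` consists of an `n`-vertex central path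
(the `Sum.inl` part) together with `n` disjoint copies of `G_i`. -/
def Vt (n : ℕ) : ℕ → Type
  | 0 => Fin n
  | (i + 1) => Fin n ⊕ (Fin n × Vt n i)

/-- The root of `G_{i+1}`: the first vertex of the path in `G_1`, respectively
an endpoint of the central path. -/
def isRootVt (n : ℕ) : ∀ i, Vt n i → Prop
  | 0, v => v.val = 0
  | (_ + 1), v => match v with
    | Sum.inl x => x.val = 0
    | Sum.inr _ => False

/-- Auxiliary adjacency relation for `G_{i+1}`. -/
def gtRel (n : ℕ) : ∀ i, Vt n i → Vt n i → Prop
  | 0, a, b => a.val + 1 = b.val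
  | (i + 1), a, b => match a, b with
    | Sum.inl x, Sum.inl y => x.val + 1 = y.val
    | Sum.inl x, Sum.inr (j, w) => x = j ∧ isRootVt n i w
    | Sum.inr (j, w), Sum.inr (j', w') => j = j' ∧ gtRel n i w w'
    | _, _ => False

/-- The tree `G_{i+1}`: `Gt n i` is the tree `G_{i+1}` of the paper, built with
parameter `n`; `Gt n 0 = G_1` is the `n`-vertex path, and `Gt n i = G_{i+1}`
is obtained from an `n`-vertex central path by attaching to each of its
vertices a disjoint copy of `G_i` by an edge to the root of that copy. -/
def Gt (n : ℕ) (i : ℕ) : SimpleGraph (Vt n i) :=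
  SimpleGraph.fromRel (gtRel n i)
instance fintypeVt (n : ℕ) : ∀ i, Fintype (Vt n i)
  | 0 => inferInstanceAs (Fintype (Fin n))
  | (i+1) => letI := fintypeVt n i
             inferInstanceAs (Fintype (Fin n ⊕ Fin n × Vt n i))

instance decEqVt (n : ℕ) : ∀ i, DecidableEq (Vt n i)
  | 0 => inferInstanceAs (DecidableEq (Fin n))
  | (i+1) => letI := decEqVt n i
             inferInstanceAs (DecidableEq (Fin n ⊕ Fin n × Vt n i))

lemma root_unique (n i : ℕ) {v w : Vt n i} (hv : isRootVt n i v) (hw : isRootVt n i w) :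
    v = w := by
  cases i with
  | zero => exact Fin.ext (hv.trans hw.symm)
  | succ i =>
    cases v with
    | inl x =>
      cases w with
      | inl y =>
        exact congrArg Sum.inl (Fin.ext ((hv : x.val = 0).trans (hw : y.val = 0).symm))
      | inr p => exact (hw : False).elim
    | inr p => exact (hv : False).elim

lemma sub_ncard_le_one {α : Type*} {s t : Set α} (h : s ⊆ t) (ht : t.Subsingleton) :
    s.ncard ≤ 1 :=
  (Set.ncard_le_one (ht.anti h).finite).2 fun a ha b hb => ht (h ha) (h hb)

lemma ncard_le_two {α : Type*} {s t1 t2 : Set α} (h : s ⊆ t1 ∪ t2)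
    (h1 : t1.Subsingleton) (h2 : t2.Subsingleton) : s.ncard ≤ 2 := by
  have hf : (t1 ∪ t2).Finite := h1.finite.union h2.finite
  have := Set.ncard_le_ncard h hf
  have := Set.ncard_union_le t1 t2
  have := (Set.ncard_le_one h1.finite).2 fun a ha b hb => h1 ha hb
  have := (Set.ncard_le_one h2.finite).2 fun a ha b hb => h2 ha hb
  omega

lemma ncard_le_three {α : Type*} {s t1 t2 t3 : Set α} (h : s ⊆ t1 ∪ t2 ∪ t3)
    (h1 : t1.Subsingleton) (h2 : t2.Subsingleton) (h3 : t3.Subsingleton) : s.ncard ≤ 3 := by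
  have hf : (t1 ∪ t2 ∪ t3).Finite := (h1.finite.union h2.finite).union h3.finite
  have := Set.ncard_le_ncard h hf
  have := Set.ncard_union_le (t1 ∪ t2) t3
  have := Set.ncard_union_le t1 t2
  have := (Set.ncard_le_one h1.finite).2 fun a ha b hb => h1 ha hb
  have := (Set.ncard_le_one h2.finite).2 fun a ha b hb => h2 ha hb
  have := (Set.ncard_le_one h3.finite).2 fun a ha b hb => h3 ha hb
  omega

lemma deg_aux (n : ℕ) : ∀ i, (∀ v : Vt n i, ((Gt n i).neighborSet v).ncard ≤ 3) ∧
    (∀ v : Vt n i, isRootVt n i v → ((Gt n i).neighborSet v).ncard ≤ 2) := by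
  intro i
  induction i with
  | zero =>
    have hsub1 : ∀ v : Fin n, Set.Subsingleton {u : Fin n | u.val = v.val + 1} :=
      fun v a ha b hb => Fin.ext ((ha : a.val = v.val + 1).trans (hb : b.val = v.val+1).symm)
    have hsub2 : ∀ v : Fin n, Set.Subsingleton {u : Fin n | u.val + 1 = v.val} :=
      fun v a ha b hb => Fin.ext (by
        have h1 : a.val + 1 = v.val := ha
        have h2 : b.val + 1 = v.val := hb
        omega)
    constructor
    · intro v
      refine (ncard_le_two ?_ (hsub1 v) (hsub2 v)).trans (by omega)
      intro u hu
      obtain ⟨hne, h | h⟩ := hu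
      · exact Or.inl (h.symm : u.val = v.val + 1)
      · exact Or.inr (h : u.val + 1 = v.val)
    · intro v hv
      refine (sub_ncard_le_one ?_ (hsub1 v)).trans (by omega)
      intro u hu
      obtain ⟨hne, h | h⟩ := hu
      · exact (h.symm : u.val = v.val + 1)
      · exact absurd ((h : u.val + 1 = v.val).trans (hv : v.val = 0)) (by omega)
  | succ i ih =>
    have hS1 : ∀ x : Fin n,
        Set.Subsingleton {u : Vt n (i+1) | ∃ y : Fin n, u = Sum.inl y ∧ y.val = x.val + 1} := by
      rintro x a ⟨y, rfl, hy⟩ b ⟨y', rfl, hy'⟩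
      exact congrArg Sum.inl (Fin.ext (hy.trans hy'.symm))
    have hS2 : ∀ x : Fin n,
        Set.Subsingleton {u : Vt n (i+1) | ∃ y : Fin n, u = Sum.inl y ∧ y.val + 1 = x.val} := by
      rintro x a ⟨y, rfl, hy⟩ b ⟨y', rfl, hy'⟩
      exact congrArg Sum.inl (Fin.ext (by omega))
    have hS3 : ∀ x : Fin n,
        Set.Subsingleton {u : Vt n (i+1) | ∃ w : Vt n i, u = Sum.inr (x, w) ∧ isRootVt n i w} := by
      rintro x a ⟨w, rfl, hw⟩ b ⟨w', rfl, hw'⟩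
      exact congrArg Sum.inr (congrArg _ (root_unique n i hw hw'))
    have hinl : ∀ x : Fin n, (Gt n (i+1)).neighborSet (Sum.inl x) ⊆
        {u : Vt n (i+1) | ∃ y : Fin n, u = Sum.inl y ∧ y.val = x.val + 1} ∪
        {u : Vt n (i+1) | ∃ y : Fin n, u = Sum.inl y ∧ y.val + 1 = x.val} ∪
        {u : Vt n (i+1) | ∃ w : Vt n i, u = Sum.inr (x, w) ∧ isRootVt n i w} := by
      intro x u hu
      obtain ⟨hne, h | h⟩ := hu
      · rcases u with y | ⟨j, w⟩
        · exact Or.inl (Or.inl ⟨y, rfl, (h : x.val + 1 = y.val).symm⟩)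
        · obtain ⟨rfl, hw⟩ := (h : x = j ∧ isRootVt n i w)
          exact Or.inr ⟨w, rfl, hw⟩
      · rcases u with y | ⟨j, w⟩
        · exact Or.inl (Or.inr ⟨y, rfl, (h : y.val + 1 = x.val)⟩)
        · exact (h : False).elim
    have hinr : ∀ (j : Fin n) (w : Vt n i), (Gt n (i+1)).neighborSet (Sum.inr (j, w)) ⊆
        ((fun w' => (Sum.inr (j, w') : Vt n (i+1))) '' ((Gt n i).neighborSet w)) ∪
        {u : Vt n (i+1) | u = Sum.inl j ∧ isRootVt n i w} := by
      intro j w u hu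
      obtain ⟨hne, h | h⟩ := hu
      · rcases u with y | ⟨j', w'⟩
        · exact (h : False).elim
        · obtain ⟨rfl, hw⟩ := (h : j = j' ∧ gtRel n i w w')
          refine Or.inl ⟨w', ⟨?_, Or.inl hw⟩, rfl⟩
          intro hww'; exact hne (by rw [hww'])
      · rcases u with y | ⟨j', w'⟩
        · obtain ⟨rfl, hw⟩ := (h : y = j ∧ isRootVt n i w)
          exact Or.inr ⟨rfl, hw⟩
        · obtain ⟨rfl, hw⟩ := (h : j' = j ∧ gtRel n i w' w)
          refine Or.inl ⟨w', ⟨?_, Or.inr hw⟩, rfl⟩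
          intro hww'; exact hne (by rw [hww'])
    have hinj : ∀ j : Fin n, Function.Injective (fun w' => (Sum.inr (j, w') : Vt n (i+1))) :=
      fun j a b h => by simpa using h
    constructor
    · intro v
      rcases v with x | ⟨j, w⟩
      · exact ncard_le_three (hinl x) (hS1 x) (hS2 x) (hS3 x)
      · refine (Set.ncard_le_ncard (hinr j w) ((Set.toFinite _).union (Set.toFinite _))).trans ?_
        have h1 := Set.ncard_union_le
          ((fun w' => (Sum.inr (j, w') : Vt n (i+1))) '' ((Gt n i).neighborSet w))
          {u : Vt n (i+1) | u = Sum.inl j ∧ isRootVt n i w}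
        rw [Set.ncard_image_of_injective _ (hinj j)] at h1
        by_cases hr : isRootVt n i w
        · have h2 := ih.2 w hr
          have h3 : ({u : Vt n (i+1) | u = Sum.inl j ∧ isRootVt n i w}).ncard ≤ 1 :=
            sub_ncard_le_one (le_refl _) (fun a ha b hb => ha.1.trans hb.1.symm)
          exact h1.trans (Nat.add_le_add h2 h3)
        · have h3 : ({u : Vt n (i+1) | u = Sum.inl j ∧ isRootVt n i w}).ncard = 0 := by
            rw [Set.ncard_eq_zero]
            ext u; simp only [Set.mem_setOf_eq, Set.mem_empty_iff_false, iff_false]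
            rintro ⟨-, hw⟩; exact hr hw
          have h2 := ih.1 w
          exact h1.trans (Nat.add_le_add h2 h3.le)
    · intro v hv
      rcases v with x | ⟨j, w⟩
      · have hx : x.val = 0 := hv
        refine ncard_le_two ?_ (hS1 x) (hS3 x)
        intro u hu
        rcases hinl x hu with (h | h) | h
        · exact Or.inl h
        · obtain ⟨y, rfl, hy⟩ := h; omega
        · exact Or.inr h
      · exact (hv : False).elim
lemma enc_lt (p q r n' : ℕ) (hq : q < n') (hr : r < p) : p * q + r < n' * p := by
  calc p * q + r < p * q + p := Nat.add_lt_add_left hr _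
    _ = p * (q + 1) := by ring
    _ ≤ p * n' := Nat.mul_le_mul_left _ hq
    _ = n' * p := Nat.mul_comm _ _

lemma enc_div (p q r : ℕ) (hp : 0 < p) (hr : r < p) : (p * q + r) / p = q := by
  have h : p * q + r = r + q * p := by ring
  rw [h, Nat.add_mul_div_right _ _ hp, Nat.div_eq_of_lt hr, Nat.zero_add]

lemma enc_mod (p q r : ℕ) (hr : r < p) : (p * q + r) % p = r := by
  have h : p * q + r = r + q * p := by ring
  rw [h, Nat.add_mul_mod_self_right, Nat.mod_eq_of_lt hr]

lemma mod_le_mod_of_div_eq {p k1 k2 : ℕ} (h : k1 ≤ k2) (hq : k1 / p = k2 / p) :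
    k1 % p ≤ k2 % p := by
  have h1 := Nat.div_add_mod k1 p
  have h2 := Nat.div_add_mod k2 p
  rw [hq] at h1
  generalize p * (k2 / p) = A at h1 h2
  omega

def stepBags (n i m : ℕ) (hn : 1 ≤ n) (B : Fin m → Finset (Vt n i))
    (k : Fin (n * (m + 1))) : Finset (Vt n (i + 1)) :=
  let q : Fin n := ⟨k.val / (m + 1), (Nat.div_lt_iff_lt_mul (Nat.succ_pos m)).2 k.isLt⟩
  (if ht : k.val % (m + 1) < m then
    insert (Sum.inl q) ((B ⟨k.val % (m + 1), ht⟩).image (fun w => Sum.inr (q, w)))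
  else
    {Sum.inl q, Sum.inl ⟨min (q.val + 1) (n - 1),
      Nat.lt_of_le_of_lt (Nat.min_le_right _ _) (by omega)⟩} : Finset (Fin n ⊕ Fin n × Vt n i))

lemma mem_stepBags_inl (n i m : ℕ) (hn : 1 ≤ n) (B : Fin m → Finset (Vt n i))
    (x : Fin n) (k : Fin (n * (m + 1))) :
    (@Membership.mem (Vt n (i + 1)) _ _ (stepBags n i m hn B k) (Sum.inl x)) ↔
      (k.val / (m + 1) = x.val ∨ (k.val % (m + 1) = m ∧ k.val / (m + 1) + 1 = x.val)) := by
  have hq : k.val / (m + 1) < n := (Nat.div_lt_iff_lt_mul (Nat.succ_pos m)).2 k.isLt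
  have hr : k.val % (m + 1) < m + 1 := Nat.mod_lt _ (Nat.succ_pos m)
  have hx := x.isLt
  unfold stepBags
  show (Sum.inl x : Fin n ⊕ Fin n × Vt n i) ∈ (_ : Finset (Fin n ⊕ Fin n × Vt n i)) ↔ _
  by_cases ht : k.val % (m + 1) < m
  · rw [dif_pos ht]
    simp only [Finset.mem_insert, Finset.mem_image, Fin.ext_iff, Sum.inl.injEq]
    constructor
    · rintro (h | ⟨w, -, h⟩)
      · exact Or.inl h.symm
      · exact absurd h (by simp)
    · rintro (h | ⟨h, -⟩)
      · exact Or.inl h.symm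
      · omega
  · rw [dif_neg ht]
    simp only [Finset.mem_insert, Finset.mem_singleton, Sum.inl.injEq, Fin.ext_iff]
    generalize hQ : k.val / (m + 1) = q at *
    generalize hR : k.val % (m + 1) = r at *
    omega

lemma mem_stepBags_inr (n i m : ℕ) (hn : 1 ≤ n) (B : Fin m → Finset (Vt n i))
    (j : Fin n) (w : Vt n i) (k : Fin (n * (m + 1))) :
    (@Membership.mem (Vt n (i + 1)) _ _ (stepBags n i m hn B k) (Sum.inr (j, w))) ↔
      (k.val / (m + 1) = j.val ∧ ∃ h : k.val % (m + 1) < m, w ∈ B ⟨k.val % (m + 1), h⟩) := by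
  unfold stepBags
  show (Sum.inr (j, w) : Fin n ⊕ Fin n × Vt n i) ∈ (_ : Finset (Fin n ⊕ Fin n × Vt n i)) ↔ _
  by_cases ht : k.val % (m + 1) < m
  · rw [dif_pos ht]
    simp only [Finset.mem_insert, Finset.mem_image]
    constructor
    · rintro (h | ⟨w', hw', h⟩)
      · exact absurd h (by simp)
      · have h' := Sum.inr.inj h
        have hj : (⟨k.val / (m+1), (Nat.div_lt_iff_lt_mul (Nat.succ_pos m)).2 k.isLt⟩ : Fin n) = j :=
          congrArg Prod.fst h'
        have hw : w' = w := congrArg Prod.snd h'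
        refine ⟨?_, ht, by rwa [← hw]⟩
        exact congrArg Fin.val hj
    · rintro ⟨h1, h2, h3⟩
      refine Or.inr ⟨w, h3, ?_⟩
      congr 1
      exact Prod.ext (Fin.ext h1) rfl
  · rw [dif_neg ht]
    simp only [Finset.mem_insert, Finset.mem_singleton]
    constructor
    · rintro (h | h) <;> exact absurd h (by simp)
    · rintro ⟨-, h, -⟩; exact absurd h ht
lemma pw_step (n i m : ℕ) (hn : 1 ≤ n) (hm : 0 < m) (B : Fin m → Finset (Vt n i))
    (hdec : IsPathDecompOn (Gt n i) Set.univ B) :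
    IsPathDecompOn (Gt n (i+1)) Set.univ (stepBags n i m hn B) := by
  obtain ⟨-, hedge, hcov, hcons⟩ := hdec
  have hrel : ∀ a b : Vt n (i+1), a ≠ b → gtRel n (i+1) a b →
      ∃ k, a ∈ stepBags n i m hn B k ∧ b ∈ stepBags n i m hn B k := by
    rintro (x | ⟨j, w0⟩) (y | ⟨j', w0'⟩) hne h
    · -- inl-inl
      have hxy : x.val + 1 = y.val := h
      have hy := y.isLt
      refine ⟨⟨(m+1) * x.val + m, enc_lt _ _ _ _ x.isLt (by omega)⟩, ?_, ?_⟩ <;>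
        rw [mem_stepBags_inl]
      · exact Or.inl (enc_div _ _ _ (Nat.succ_pos m) (by omega))
      · refine Or.inr ⟨enc_mod _ _ _ (by omega), ?_⟩
        rw [enc_div _ _ _ (Nat.succ_pos m) (by omega)]
        exact hxy
    · -- inl-inr
      obtain ⟨rfl, hroot⟩ := (h : x = j' ∧ isRootVt n i w0')
      obtain ⟨t, ht⟩ := hcov w0' trivial
      have htm := t.isLt
      refine ⟨⟨(m+1) * x.val + t.val, enc_lt _ _ _ _ x.isLt (by omega)⟩, ?_, ?_⟩
      · rw [mem_stepBags_inl]
        exact Or.inl (enc_div _ _ _ (Nat.succ_pos m) (by omega))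
      · rw [mem_stepBags_inr]
        refine ⟨enc_div _ _ _ (Nat.succ_pos m) (by omega), ?_⟩
        have hmod : ((m+1) * x.val + t.val) % (m+1) = t.val := enc_mod _ _ _ (by omega)
        refine ⟨by rw [hmod]; exact htm, ?_⟩
        convert ht using 2
        exact Fin.ext hmod
    · exact (h : False).elim
    · -- inr-inr
      obtain ⟨rfl, hrel'⟩ := (h : j = j' ∧ gtRel n i w0 w0')
      have hne' : w0 ≠ w0' := fun hh => hne (by rw [hh])
      have hadj : (Gt n i).Adj w0 w0' := ⟨hne', Or.inl hrel'⟩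
      obtain ⟨t, ht1, ht2⟩ := hedge hadj trivial trivial
      have htm := t.isLt
      have hmod : ((m+1) * j.val + t.val) % (m+1) = t.val := enc_mod _ _ _ (by omega)
      refine ⟨⟨(m+1) * j.val + t.val, enc_lt _ _ _ _ j.isLt (by omega)⟩, ?_, ?_⟩ <;>
        rw [mem_stepBags_inr] <;>
        refine ⟨enc_div _ _ _ (Nat.succ_pos m) (by omega), by rw [hmod]; exact htm, ?_⟩
      · convert ht1 using 2
        exact Fin.ext hmod
      · convert ht2 using 2
        exact Fin.ext hmod
  refine ⟨fun _ => Set.subset_univ _, ?_, ?_, ?_⟩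
  · -- edges
    rintro v w ⟨hne, h | h⟩ - -
    · exact hrel v w hne h
    · obtain ⟨k, h1, h2⟩ := hrel w v (Ne.symm hne) h
      exact ⟨k, h2, h1⟩
  · -- cover
    rintro (x | ⟨j, w0⟩) -
    · refine ⟨⟨(m+1) * x.val + 0, enc_lt _ _ _ _ x.isLt (by omega)⟩, ?_⟩
      rw [mem_stepBags_inl]
      exact Or.inl (enc_div _ _ _ (Nat.succ_pos m) (by omega))
    · obtain ⟨t, ht⟩ := hcov w0 trivial
      have htm := t.isLt
      refine ⟨⟨(m+1) * j.val + t.val, enc_lt _ _ _ _ j.isLt (by omega)⟩, ?_⟩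
      rw [mem_stepBags_inr]
      refine ⟨enc_div _ _ _ (Nat.succ_pos m) (by omega), ?_⟩
      have hmod : ((m+1) * j.val + t.val) % (m+1) = t.val := enc_mod _ _ _ (by omega)
      refine ⟨by rw [hmod]; exact htm, ?_⟩
      convert ht using 2
      exact Fin.ext hmod
  · -- consecutive
    rintro (x | ⟨j, w0⟩) k1 k2 k3 h12 h23 hm1 hm3
    · rw [mem_stepBags_inl] at hm1 hm3 ⊢
      have d12 : k1.val / (m+1) ≤ k2.val / (m+1) := Nat.div_le_div_right h12
      have d23 : k2.val / (m+1) ≤ k3.val / (m+1) := Nat.div_le_div_right h23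
      have r1 : k1.val % (m+1) < m + 1 := Nat.mod_lt _ (Nat.succ_pos m)
      have r2 : k2.val % (m+1) < m + 1 := Nat.mod_lt _ (Nat.succ_pos m)
      have r3 : k3.val % (m+1) < m + 1 := Nat.mod_lt _ (Nat.succ_pos m)
      have key12 : k1.val / (m+1) = k2.val / (m+1) → k1.val % (m+1) ≤ k2.val % (m+1) :=
        fun h => mod_le_mod_of_div_eq h12 h
      have key23 : k2.val / (m+1) = k3.val / (m+1) → k2.val % (m+1) ≤ k3.val % (m+1) :=
        fun h => mod_le_mod_of_div_eq h23 h
      generalize k1.val / (m+1) = q1 at *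
      generalize k2.val / (m+1) = q2 at *
      generalize k3.val / (m+1) = q3 at *
      generalize k1.val % (m+1) = a1 at *
      generalize k2.val % (m+1) = a2 at *
      generalize k3.val % (m+1) = a3 at *
      omega
    · rw [mem_stepBags_inr] at hm1 hm3 ⊢
      obtain ⟨hq1, hr1, hb1⟩ := hm1
      obtain ⟨hq3, hr3, hb3⟩ := hm3
      have d12 : k1.val / (m+1) ≤ k2.val / (m+1) := Nat.div_le_div_right h12
      have d23 : k2.val / (m+1) ≤ k3.val / (m+1) := Nat.div_le_div_right h23
      have hq2 : k2.val / (m+1) = j.val := by omega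
      have key12 : k1.val % (m+1) ≤ k2.val % (m+1) :=
        mod_le_mod_of_div_eq h12 (by omega)
      have key23 : k2.val % (m+1) ≤ k3.val % (m+1) :=
        mod_le_mod_of_div_eq h23 (by omega)
      have hr2 : k2.val % (m+1) < m := by omega
      refine ⟨hq2, hr2, ?_⟩
      exact hcons w0 ⟨k1.val % (m+1), hr1⟩ ⟨k2.val % (m+1), hr2⟩ ⟨k3.val % (m+1), hr3⟩
        key12 key23 hb1 hb3

lemma card_stepBags (n i m : ℕ) (hn : 1 ≤ n) (B : Fin m → Finset (Vt n i)) (c : ℕ)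
    (hc1 : 1 ≤ c) (hc : ∀ t, (B t).card ≤ c + 1) :
    ∀ k, (stepBags n i m hn B k).card ≤ c + 2 := by
  intro k
  unfold stepBags
  show (_ : Finset (Fin n ⊕ Fin n × Vt n i)).card ≤ c + 2
  by_cases ht : k.val % (m + 1) < m
  · rw [dif_pos ht]
    refine (Finset.card_insert_le _ _).trans ?_
    have := (Finset.card_image_le (f := fun w => (Sum.inr (⟨k.val / (m+1), (Nat.div_lt_iff_lt_mul (Nat.succ_pos m)).2 k.isLt⟩, w) : Fin n ⊕ Fin n × Vt n i)) (s := B ⟨k.val % (m + 1), ht⟩)).trans (hc _)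
    omega
  · rw [dif_neg ht]
    refine (Finset.card_insert_le _ _).trans ?_
    simp only [Finset.card_singleton]
    omega

lemma pw_aux (n : ℕ) (hn : 1 ≤ n) : ∀ i : ℕ, ∃ m : ℕ, 0 < m ∧
    ∃ B : Fin m → Finset (Vt n i), IsPathDecompOn (Gt n i) Set.univ B ∧
      ∀ t, (B t).card ≤ i + 2 := by
  intro i
  induction i with
  | zero =>
    refine ⟨n, hn, fun k => if h : k.val + 1 < n then {k, ⟨k.val + 1, h⟩} else {k}, ?_, ?_⟩
    · have hmem : ∀ (x k : Fin n), (x ∈ if h : k.val + 1 < n then ({k, ⟨k.val + 1, h⟩} : Finset (Fin n)) else {k}) ↔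
          (x.val ≤ k.val + 1 ∧ k.val ≤ x.val) := by
        intro x k
        have hx := x.isLt
        have hk := k.isLt
        by_cases h : k.val + 1 < n
        · rw [dif_pos h]
          simp only [Finset.mem_insert, Finset.mem_singleton, Fin.ext_iff]
          omega
        · rw [dif_neg h]
          simp only [Finset.mem_singleton, Fin.ext_iff]
          omega
      refine ⟨fun _ => Set.subset_univ _, ?_, ?_, ?_⟩
      · rintro v w ⟨hne, h | h⟩ - -
        · refine ⟨v, (hmem v v).2 (by omega), (hmem w v).2 ?_⟩
          have h' : v.val + 1 = w.val := h
          omega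
        · refine ⟨w, (hmem v w).2 ?_, (hmem w w).2 (by omega)⟩
          have h' : w.val + 1 = v.val := h
          omega
      · rintro v -
        exact ⟨v, (hmem v v).2 (by omega)⟩
      · intro v k1 k2 k3 h12 h23 hm1 hm3
        have hm1 := (hmem v k1).1 hm1
        have hm3 := (hmem v k3).1 hm3
        refine (hmem v k2).2 ?_
        have h12' : k1.val ≤ k2.val := h12
        have h23' : k2.val ≤ k3.val := h23
        omega
    · intro t
      by_cases h : t.val + 1 < n
      · simp only [dif_pos h]
        exact (Finset.card_insert_le _ _).trans (by exact Nat.succ_le_succ (Finset.card_singleton _).le)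
      · simp only [dif_neg h]
        exact (Finset.card_singleton _).le.trans (by norm_num)
  | succ i ih =>
    obtain ⟨m, hm, B, hdec, hcard⟩ := ih
    refine ⟨n * (m + 1), by positivity, stepBags n i m hn B, pw_step n i m hn hm B hdec, ?_⟩
    exact card_stepBags n i m hn B (i + 1) (by omega) (fun t => by simpa using hcard t)
/-- For every `i ≥ 1` and `n ≥ 1`, the tree `G_i` (here
`Gt n (i-1)`, i.e. `Gt n i = G_{i+1}`) has maximum degree at most 3 and
pathwidth at most `i`. -/
theorem stmt13 (n i : ℕ) (hn : 1 ≤ n) :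
    MaxDegLE (Gt n i) 3 ∧ PWle (Gt n i) (i + 1) := by
  refine ⟨(deg_aux n i).1, ?_⟩
  obtain ⟨m, hm, B, hdec, hcard⟩ := pw_aux n hn i
  exact ⟨m, B, hm, hdec, hcard⟩
end

section
/- Let G be a graph with a T-partition (B_x : x ∈ V(T)) of width at most c, let Q be a path in T and R := ⋃{B_x : x ∈ V(Q)}. Then every connected component C of G − R has at most c neighbours in R; that is, |N_G(V(C)) ∩ R| ≤ c. -/
lemma seg_exists {α : Type*} {T : SimpleGraph α} {a b : α} (q : T.Walk a b) (hq : q.IsPath)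
    {x1 x2 : α} (h1 : x1 ∈ q.support) (h2 : x2 ∈ q.support) :
    ∃ s : T.Walk x1 x2, s.IsPath ∧ ∀ z ∈ s.support, z ∈ q.support := by
  classical
  have hsplit : x2 ∈ (q.takeUntil x1 h1).support ∨ x2 ∈ (q.dropUntil x1 h1).support := by
    rw [← SimpleGraph.Walk.mem_support_append_iff, q.take_spec h1]; exact h2
  rcases hsplit with h | h
  · have h' : x2 ∈ (q.takeUntil x1 h1).reverse.support := by
      rwa [SimpleGraph.Walk.support_reverse, List.mem_reverse]
    refine ⟨((q.takeUntil x1 h1).reverse).takeUntil x2 h', ((hq.takeUntil h1).reverse).takeUntil h', ?_⟩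
    intro z hz
    have hz1 := SimpleGraph.Walk.support_takeUntil_subset _ h' hz
    rw [SimpleGraph.Walk.support_reverse, List.mem_reverse] at hz1
    exact SimpleGraph.Walk.support_takeUntil_subset _ h1 hz1
  · refine ⟨(q.dropUntil x1 h1).takeUntil x2 h, (hq.dropUntil h1).takeUntil h, ?_⟩
    intro z hz
    exact SimpleGraph.Walk.support_dropUntil_subset _ h1
      (SimpleGraph.Walk.support_takeUntil_subset _ h hz)

/-- Let `G` have a `T`-partition of width at most `c`, let
`Q` be a path in `T` and `R := ⋃ {B_x : x ∈ V(Q)}`. Then every connected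
component `C` of `G − R` has at most `c` neighbours in `R`:
`|N_G(V(C)) ∩ R| ≤ c`. -/
theorem stmt17 {V ι : Type*} (G : SimpleGraph V) (T : SimpleGraph ι)
    (hT : T.IsTree) (B : ι → Finset V) (hpart : IsTreePartition T G B)
    (c : ℕ) (hwidth : ∀ x, (B x).card ≤ c)
    (a b : ι) (q : T.Walk a b) (hq : q.IsPath)
    (R : Set V) (hR : R = {v : V | ∃ x ∈ q.support, v ∈ B x})
    (v : V) (hv : v ∉ R)
    (C : Set V) (hC : C = {w : V | (delv G R).Reachable v w}) :
    ({u : V | u ∉ C ∧ ∃ w ∈ C, G.Adj w u} ∩ R).ncard ≤ c := by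
  
  classical
  have hGadj : ∀ {a' b' : V}, (delv G R).Adj a' b' → G.Adj a' b' ∧ a' ∉ R ∧ b' ∉ R := by
    intro a' b' h
    rw [delv, SimpleGraph.fromRel_adj] at h
    rcases h with ⟨-, h | h⟩
    · exact ⟨h.1, h.2⟩
    · exact ⟨h.1.symm, h.2.2, h.2.1⟩
  set f : V → ι := fun w => (hpart.1 w).choose with hfdef
  have hfmem : ∀ w, w ∈ B (f w) := fun w => (hpart.1 w).choose_spec.1
  have hfuniq : ∀ w x, w ∈ B x → x = f w := fun w x hx => (hpart.1 w).choose_spec.2 x hx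
  have hfR : ∀ w, w ∉ R → f w ∉ q.support := by
    intro w hw hx
    exact hw (by rw [hR]; exact ⟨f w, hx, hfmem w⟩)
  have hRf : ∀ u, u ∈ R → f u ∈ q.support := by
    intro u hu
    rw [hR] at hu
    obtain ⟨x, hx, hxB⟩ := hu
    rwa [hfuniq u x hxB] at hx
  have hCR' : ∀ {a' w : V} (p : (delv G R).Walk a' w), a' ∉ R → w ∉ R := by
    intro a' w p
    induction p with
    | nil => exact id
    | cons h p ih => exact fun _ => ih (hGadj h).2.2
  have hCR : ∀ w ∈ C, w ∉ R := by
    intro w hw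
    rw [hC] at hw
    obtain ⟨p⟩ := hw
    exact hCR' p hv
  have key : ∀ {w1 w2 : V} (p : (delv G R).Walk w1 w2), w1 ∉ R →
      ∃ W : T.Walk (f w1) (f w2), ∀ z ∈ W.support, z ∉ q.support := by
    intro w1 w2 p
    induction p with
    | nil =>
      intro h1
      refine ⟨SimpleGraph.Walk.nil, ?_⟩
      intro z hz
      rw [SimpleGraph.Walk.support_nil, List.mem_singleton] at hz
      subst hz
      exact hfR _ h1
    | @cons a' y w h p ih =>
      intro h1
      obtain ⟨hG, -, hyR⟩ := hGadj h
      obtain ⟨W, hW⟩ := ih hyR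
      rcases hpart.2 hG (hfmem a') (hfmem y) with heq | hadj
      · refine ⟨W.copy heq.symm rfl, ?_⟩
        intro z hz
        rw [SimpleGraph.Walk.support_copy] at hz
        exact hW z hz
      · refine ⟨SimpleGraph.Walk.cons hadj W, ?_⟩
        intro z hz
        rw [SimpleGraph.Walk.support_cons, List.mem_cons] at hz
        rcases hz with hz | hz
        · subst hz; exact hfR _ h1
        · exact hW z hz
  rcases Set.eq_empty_or_nonempty ({u : V | u ∉ C ∧ ∃ w ∈ C, G.Adj w u} ∩ R) with he | ⟨u0, hu0⟩
  · rw [he]; simp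
  obtain ⟨⟨-, w1, hw1C, hadj1⟩, hu0R⟩ := hu0
  have hw1R : w1 ∉ R := hCR w1 hw1C
  have hsub : {u : V | u ∉ C ∧ ∃ w ∈ C, G.Adj w u} ∩ R ⊆ ↑(B (f u0)) := by
    rintro u ⟨⟨-, w2, hw2C, hadj2⟩, huR⟩
    have hw2R : w2 ∉ R := hCR w2 hw2C
    have hmain : f u0 = f u := by
      by_contra hne
      have ha1 : T.Adj (f w1) (f u0) := by
        rcases hpart.2 hadj1 (hfmem w1) (hfmem u0) with he' | h'
        · exact absurd (he' ▸ hRf u0 hu0R) (hfR w1 hw1R)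
        · exact h'
      have ha2 : T.Adj (f w2) (f u) := by
        rcases hpart.2 hadj2 (hfmem w2) (hfmem u) with he' | h'
        · exact absurd (he' ▸ hRf u huR) (hfR w2 hw2R)
        · exact h'
      have hreach : (delv G R).Reachable w1 w2 := by
        rw [hC] at hw1C hw2C
        exact hw1C.symm.trans hw2C
      obtain ⟨p⟩ := hreach
      obtain ⟨W, hW⟩ := key p hw1R
      set W' : T.Walk (f u0) (f u) :=
        SimpleGraph.Walk.cons ha1.symm
          (W.append (SimpleGraph.Walk.cons ha2 SimpleGraph.Walk.nil)) with hW'def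
      have hedge : ∀ z z' : ι, s(z, z') ∈ W'.edges → z ∉ q.support ∨ z' ∉ q.support := by
        intro z z' hzz
        rw [hW'def, SimpleGraph.Walk.edges_cons, SimpleGraph.Walk.edges_append,
          SimpleGraph.Walk.edges_cons, SimpleGraph.Walk.edges_nil, List.mem_cons,
          List.mem_append, List.mem_singleton] at hzz
        rcases hzz with hzz | hzz | hzz
        · rw [Sym2.eq_iff] at hzz
          rcases hzz with ⟨-, hz'⟩ | ⟨hz, -⟩
          · exact Or.inr (hz' ▸ hfR w1 hw1R)
          · exact Or.inl (hz ▸ hfR w1 hw1R)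
        · exact Or.inl (hW z (SimpleGraph.Walk.fst_mem_support_of_mem_edges W hzz))
        · rw [Sym2.eq_iff] at hzz
          rcases hzz with ⟨hz, -⟩ | ⟨-, hz'⟩
          · exact Or.inl (hz ▸ hfR w2 hw2R)
          · exact Or.inr (hz' ▸ hfR w2 hw2R)
      obtain ⟨s, hsPath, hsSupp⟩ := seg_exists q hq (hRf u0 hu0R) (hRf u huR)
      have huniq := hT.IsAcyclic.path_unique W'.toPath ⟨s, hsPath⟩
      have hval : (W'.toPath : T.Walk (f u0) (f u)) = s := congrArg Subtype.val huniq
      have hnil : ¬ s.Nil := SimpleGraph.Walk.not_nil_of_ne hne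
      have hcons := s.cons_tail_eq hnil
      have hmemS : s(f u0, s.getVert 1) ∈ s.edges := by
        have h2 := SimpleGraph.Walk.edges_cons (s.adj_snd hnil) s.tail
        rw [hcons] at h2
        rw [h2]
        exact List.mem_cons_self
      have hy : s.getVert 1 ∈ q.support :=
        hsSupp _ (SimpleGraph.Walk.snd_mem_support_of_mem_edges s hmemS)
      have hmem : s(f u0, s.getVert 1) ∈ (W'.toPath : T.Walk (f u0) (f u)).edges := by
        rw [hval]; exact hmemS
      rcases hedge _ _ (SimpleGraph.Walk.edges_toPath_subset _ hmem) with h'' | h''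
      · exact h'' (hRf u0 hu0R)
      · exact h'' hy
    rw [Finset.mem_coe, hmain]
    exact hfmem u
  calc ({u : V | u ∉ C ∧ ∃ w ∈ C, G.Adj w u} ∩ R).ncard
      ≤ (↑(B (f u0)) : Set V).ncard := Set.ncard_le_ncard hsub (B (f u0)).finite_toSet
    _ = (B (f u0)).card := Set.ncard_coe_finset _
    _ ≤ c := hwidth _
end

section
/- If a graph G admits a path-decomposition (D_y : y ∈ V(P)) of width at most k, and X ⊆ V(P), and Y ⊆ V(P) \ X satisfies D_x ∩ D_y = ∅ for all x ∈ X, y ∈ Y and D_{y₁} ∩ D_{y₂} = ∅ for distinct y₁, y₂ ∈ Y, and Y is maximal with this property, then setting Z := ⋃{D_z : z ∈ X ∪ Y}, the sequence (D_a \ Z : a ∈ V(P)) is a path-decomposition of G − Z of width at most k − 1. -/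
/-! Removing a vertex set `Z` from every bag preserves the path-decomposition axioms on the
remaining vertices. Bags indexed by `X ∪ Y` lie inside `Z` and vanish; by maximality of `Y` every
other bag meets `Z`, so it loses at least one vertex. -/

open Finset

theorem IsPathDecompOn.sdiff {V : Type*} [DecidableEq V] {G : SimpleGraph V} {U : Set V}
    {n : ℕ} {B : Fin n → Finset V} (hB : IsPathDecompOn G U B) (Z : Finset V) :
    IsPathDecompOn G (U \ Z) (fun a => B a \ Z) := by
  obtain ⟨hsub, hedge, hcover, hconsec⟩ := hB
  refine ⟨fun i v hv => ?_, fun v w hadj hv hw => ?_, fun v hv => ?_,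
    fun v i j l hij hjl hvi hvl => ?_⟩
  · rw [coe_sdiff] at hv
    exact ⟨hsub i hv.1, hv.2⟩
  · obtain ⟨i, hvi, hwi⟩ := hedge hadj hv.1 hw.1
    exact ⟨i, mem_sdiff.2 ⟨hvi, hv.2⟩, mem_sdiff.2 ⟨hwi, hw.2⟩⟩
  · obtain ⟨i, hi⟩ := hcover v hv.1
    exact ⟨i, mem_sdiff.2 ⟨hi, hv.2⟩⟩
  · rw [mem_sdiff] at hvi hvl ⊢
    exact ⟨hconsec v i j l hij hjl hvi.1 hvl.1, hvi.2⟩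

theorem Finset.card_sdiff_lt_of_mem_inter {α : Type*} [DecidableEq α] {s t : Finset α} {x : α}
    (hx : x ∈ s ∩ t) : #(s \ t) < #s :=
  card_lt_card <| (ssubset_iff_of_subset sdiff_subset).2
    ⟨x, (mem_inter.1 hx).1, fun h => (mem_sdiff.1 h).2 (mem_inter.1 hx).2⟩

theorem card_sdiff_biUnion_le {ι V : Type*} [DecidableEq ι] [DecidableEq V] {D : ι → Finset V}
    {S : Finset ι} {k : ℕ} (hwidth : ∀ i, #(D i) ≤ k + 1)
    (hmax : ∀ a, a ∉ S → ∃ z ∈ S, D a ∩ D z ≠ ∅) (a : ι) : #(D a \ S.biUnion D) ≤ k := by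
  by_cases ha : a ∈ S
  · simp [sdiff_eq_empty_iff_subset.2 (subset_biUnion_of_mem D ha)]
  · obtain ⟨z, hz, hmeet⟩ := hmax a ha
    obtain ⟨v, hv⟩ := nonempty_iff_ne_empty.2 hmeet
    have hvZ : v ∈ D a ∩ S.biUnion D :=
      mem_inter.2 ⟨(mem_inter.1 hv).1, mem_biUnion.2 ⟨z, hz, (mem_inter.1 hv).2⟩⟩
    have := card_sdiff_lt_of_mem_inter hvZ
    have := hwidth a
    omega

theorem stmt18_general {V : Type*} [DecidableEq V] (G : SimpleGraph V)
    (k n : ℕ) (D : Fin n → Finset V)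
    (hpd : IsPathDecompOn G Set.univ D) (hwidth : ∀ i, (D i).card ≤ k + 1)
    (X Y : Finset (Fin n))
    (hmax : ∀ a : Fin n, a ∉ X ∪ Y → ∃ z ∈ X ∪ Y, D a ∩ D z ≠ ∅)
    (Z : Finset V) (hZ : Z = (X ∪ Y).biUnion D) :
    IsPathDecompOn G {v : V | v ∉ Z} (fun a => D a \ Z) ∧
    ∀ a, (D a \ Z).card ≤ k := by
  refine ⟨?_, hZ ▸ card_sdiff_biUnion_le hwidth hmax⟩
  have hpdZ := hpd.sdiff Z
  rwa [← Set.compl_eq_univ_sdiff] at hpdZ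

/-- Suppose `G` has a path-decomposition `(D_y : y ∈ V(P))` of
width at most `k`, `X ⊆ V(P)`, and `Y ⊆ V(P) \ X` satisfies `D_x ∩ D_y = ∅` for
all `x ∈ X`, `y ∈ Y`, and `D_{y₁} ∩ D_{y₂} = ∅` for distinct `y₁, y₂ ∈ Y`, and
`Y` is maximal with this property (every `a ∉ X ∪ Y` meets some `D_z`,
`z ∈ X ∪ Y`). Then with `Z := ⋃ {D_z : z ∈ X ∪ Y}`, the sequence
`(D_a \ Z : a ∈ V(P))` is a path-decomposition of `G − Z` of width at most
`k − 1`. -/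
theorem stmt18 {V : Type*} [DecidableEq V] (G : SimpleGraph V)
    (k n : ℕ) (D : Fin n → Finset V)
    (hpd : IsPathDecompOn G Set.univ D) (hwidth : ∀ i, (D i).card ≤ k + 1)
    (X Y : Finset (Fin n)) (hXY : Disjoint X Y)
    (hsep : ∀ x ∈ X, ∀ y ∈ Y, D x ∩ D y = ∅)
    (hpair : ∀ y₁ ∈ Y, ∀ y₂ ∈ Y, y₁ ≠ y₂ → D y₁ ∩ D y₂ = ∅)
    (hmax : ∀ a : Fin n, a ∉ X ∪ Y → ∃ z ∈ X ∪ Y, D a ∩ D z ≠ ∅)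
    (Z : Finset V) (hZ : Z = (X ∪ Y).biUnion D) :
    IsPathDecompOn G {v : V | v ∉ Z} (fun a => D a \ Z) ∧
    ∀ a, (D a \ Z).card ≤ k :=
  stmt18_general G k n D hpd hwidth X Y hmax Z hZ
end
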